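/- arXiv:math/0504264 — 3 statements merged into one kernel-verified Lean document; each statement's English description precedes it below -/
import Mathlib

section
/- Let φ₁(x) = 1728 x (x²−11x−1)⁵ / (x⁴+228x³+494x²−228x+1)³ and z(x) = (7x−1)⁵ / (x² (x+7)⁵). Then, as an identity of rational functions of x (i.e., for all x in the complement of the poles), φ₁(x)² (189−64 φ₁(x))⁵ / (3584 φ₁(x)² + 2457 φ₁(x) − 2916)³ = 1728 z(x) (z(x)²−11 z(x)−1)⁵ / (z(x)⁴+228 z(x)³+494 z(x)²−228 z(x)+1)³. -/
/-!
Pull both sides back to rational functions of `x`. Along `X = φ₁(x)` the numerator factor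
`189 - 64 X` and the denominator `3584 X² + 2457 X - 2916` of `ψ` become
`(7x - 1)(x + 7) R / H³` and `-2916 Q / H⁶`, where `H` is the quartic of `φ₁`. Along `z = z(x)`
the factor `z² - 11 z - 1` and the quartic of `φ₁` become `-(x² - 11x - 1)² R / (27 d²)` and
`H Q / d⁴`, with `d = x² (x + 7)⁵`, and the same polynomials `R` (degree 10) and `Q` (degree 24)
appear. After these substitutions both sides are the same monomial in `x`, `x + 7`, `7x - 1`,
`x² - 11x - 1`, `H`, `R`, `Q`; the constants agree because `1728 ^ 2 * 27 ^ 5 = -1728 * (-2916) ^ 3`.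
-/

/-- The degree-12 icosahedral Darboux covering. -/
noncomputable def phi1 (x : ℂ) : ℂ :=
  1728 * x * (x ^ 2 - 11 * x - 1) ^ 5 /
    (x ^ 4 + 228 * x ^ 3 + 494 * x ^ 2 - 228 * x + 1) ^ 3

/-- The second component of the parameterization of the fiber product. -/
noncomputable def zfun (x : ℂ) : ℂ :=
  (7 * x - 1) ^ 5 / (x ^ 2 * (x + 7) ^ 5)

def kleinCover {K : Type*} [Field K] (X : K) : K :=
  X ^ 2 * (189 - 64 * X) ^ 5 / (3584 * X ^ 2 + 2457 * X - 2916) ^ 3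

section Pullback

variable {R : Type*} [CommRing R]

def icosaQuartic (x : R) : R :=
  x ^ 4 + 228 * x ^ 3 + 494 * x ^ 2 - 228 * x + 1

def fiberR (x : R) : R :=
  -27 + 2484 * x - 5102649 * x ^ 2 + 284216688 * x ^ 3 - 354428622 * x ^ 4 + 283092408 * x ^ 5
    + 354428622 * x ^ 6 + 284216688 * x ^ 7 + 5102649 * x ^ 8 + 2484 * x ^ 9 + 27 * x ^ 10

def fiberQ (x : R) : R :=
  1 + 88 * x - 3803116 * x ^ 2 - 467922728 * x ^ 3 + 15317741346 * x ^ 4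
    - 5260402029768 * x ^ 5 + 157346646529556 * x ^ 6 - 2224285184418952 * x ^ 7
    + 7971986922075279 * x ^ 8 - 24387587344178848 * x ^ 9 - 18591310157317416 * x ^ 10
    - 69735917428266848 * x ^ 11 - 30763575787215204 * x ^ 12 + 69735917428266848 * x ^ 13
    - 18591310157317416 * x ^ 14 + 24387587344178848 * x ^ 15 + 7971986922075279 * x ^ 16
    + 2224285184418952 * x ^ 17 + 157346646529556 * x ^ 18 + 5260402029768 * x ^ 19
    + 15317741346 * x ^ 20 + 467922728 * x ^ 21 - 3803116 * x ^ 22 - 88 * x ^ 23 + x ^ 24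

theorem kleinCover_numerator_pullback (x : R) :
    189 * icosaQuartic x ^ 3 - 64 * (1728 * x * (x ^ 2 - 11 * x - 1) ^ 5) =
      (7 * x - 1) * (x + 7) * fiberR x := by
  unfold icosaQuartic fiberR; ring

theorem kleinCover_denominator_pullback (x : R) :
    3584 * (1728 * x * (x ^ 2 - 11 * x - 1) ^ 5) ^ 2
        + 2457 * (1728 * x * (x ^ 2 - 11 * x - 1) ^ 5) * icosaQuartic x ^ 3
        - 2916 * (icosaQuartic x ^ 3) ^ 2 =
      -2916 * fiberQ x := by
  unfold icosaQuartic fiberQ; ring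

theorem phi1_numerator_pullback (x : R) :
    27 * (((7 * x - 1) ^ 5) ^ 2 - 11 * (7 * x - 1) ^ 5 * (x ^ 2 * (x + 7) ^ 5)
        - (x ^ 2 * (x + 7) ^ 5) ^ 2) =
      -(x ^ 2 - 11 * x - 1) ^ 2 * fiberR x := by
  unfold fiberR; ring

theorem phi1_denominator_pullback (x : R) :
    ((7 * x - 1) ^ 5) ^ 4 + 228 * ((7 * x - 1) ^ 5) ^ 3 * (x ^ 2 * (x + 7) ^ 5)
        + 494 * ((7 * x - 1) ^ 5) ^ 2 * (x ^ 2 * (x + 7) ^ 5) ^ 2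
        - 228 * (7 * x - 1) ^ 5 * (x ^ 2 * (x + 7) ^ 5) ^ 3 + (x ^ 2 * (x + 7) ^ 5) ^ 4 =
      icosaQuartic x * fiberQ x := by
  unfold icosaQuartic fiberQ; ring

end Pullback

theorem kleinCover_div {K : Type*} [Field K] (a b : K) (hb : b ≠ 0) :
    kleinCover (a / b) =
      a ^ 2 * (189 * b - 64 * a) ^ 5 / (b * (3584 * a ^ 2 + 2457 * a * b - 2916 * b ^ 2) ^ 3) := by
  have hnum : 189 - 64 * (a / b) = (189 * b - 64 * a) / b := by field_simp
  have hden : 3584 * (a / b) ^ 2 + 2457 * (a / b) - 2916 =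
      (3584 * a ^ 2 + 2457 * a * b - 2916 * b ^ 2) / b ^ 2 := by field_simp
  rw [kleinCover, hnum, hden]
  field_simp

theorem phi1_div (c d : ℂ) (hd : d ≠ 0) :
    phi1 (c / d) =
      1728 * c * d * (c ^ 2 - 11 * c * d - d ^ 2) ^ 5 /
        (c ^ 4 + 228 * c ^ 3 * d + 494 * c ^ 2 * d ^ 2 - 228 * c * d ^ 3 + d ^ 4) ^ 3 := by
  have hnum : (c / d) ^ 2 - 11 * (c / d) - 1 = (c ^ 2 - 11 * c * d - d ^ 2) / d ^ 2 := by
    field_simp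
  have hden : (c / d) ^ 4 + 228 * (c / d) ^ 3 + 494 * (c / d) ^ 2 - 228 * (c / d) + 1 =
      (c ^ 4 + 228 * c ^ 3 * d + 494 * c ^ 2 * d ^ 2 - 228 * c * d ^ 3 + d ^ 4) / d ^ 4 := by
    field_simp
  rw [phi1, hnum, hden]
  field_simp

theorem stmt_6_general (x : ℂ)
    (h1 : x ^ 4 + 228 * x ^ 3 + 494 * x ^ 2 - 228 * x + 1 ≠ 0)
    (h2 : x ≠ 0) (h3 : x + 7 ≠ 0) :
    (phi1 x) ^ 2 * (189 - 64 * phi1 x) ^ 5 /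
        (3584 * (phi1 x) ^ 2 + 2457 * phi1 x - 2916) ^ 3 =
      1728 * zfun x * ((zfun x) ^ 2 - 11 * zfun x - 1) ^ 5 /
        ((zfun x) ^ 4 + 228 * (zfun x) ^ 3 + 494 * (zfun x) ^ 2 -
          228 * zfun x + 1) ^ 3 := by
  change kleinCover (phi1 x) = phi1 (zfun x)
  have hH : icosaQuartic x ^ 3 ≠ 0 := pow_ne_zero 3 h1
  have hd : x ^ 2 * (x + 7) ^ 5 ≠ 0 := mul_ne_zero (pow_ne_zero 2 h2) (pow_ne_zero 5 h3)
  have hz : ((7 * x - 1) ^ 5) ^ 2 - 11 * (7 * x - 1) ^ 5 * (x ^ 2 * (x + 7) ^ 5)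
      - (x ^ 2 * (x + 7) ^ 5) ^ 2 = -(x ^ 2 - 11 * x - 1) ^ 2 * fiberR x / 27 := by
    rw [← phi1_numerator_pullback]; ring
  rw [show phi1 x = 1728 * x * (x ^ 2 - 11 * x - 1) ^ 5 / icosaQuartic x ^ 3 from rfl,
    kleinCover_div _ _ hH, kleinCover_numerator_pullback,
    kleinCover_denominator_pullback, zfun, phi1_div _ _ hd, hz, phi1_denominator_pullback]
  ring

theorem stmt_6 (x : ℂ)
    (h1 : x ^ 4 + 228 * x ^ 3 + 494 * x ^ 2 - 228 * x + 1 ≠ 0)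
    (h2 : x ≠ 0) (h3 : x + 7 ≠ 0)
    (h4 : 3584 * (phi1 x) ^ 2 + 2457 * phi1 x - 2916 ≠ 0)
    (h5 : (zfun x) ^ 4 + 228 * (zfun x) ^ 3 + 494 * (zfun x) ^ 2 -
        228 * zfun x + 1 ≠ 0) :
    (phi1 x) ^ 2 * (189 - 64 * phi1 x) ^ 5 /
        (3584 * (phi1 x) ^ 2 + 2457 * phi1 x - 2916) ^ 3 =
      1728 * zfun x * ((zfun x) ^ 2 - 11 * zfun x - 1) ^ 5 /
        ((zfun x) ^ 4 + 228 * (zfun x) ^ 3 + 494 * (zfun x) ^ 2 -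
          228 * zfun x + 1) ^ 3 :=
  stmt_6_general x h1 h2 h3
end

section
/- For x real with |x| sufficiently small, ₂F₁(1/2, −1/6; 2/3; x(x+2)³/(2x+1)³) = (1+2x)^{−1/2}, where ₂F₁ is the Gauss hypergeometric series. -/
open Filter Set Topology
namespace Darb8

noncomputable def p (n : ℕ) : ℝ :=
  (ascPochhammer ℝ n).eval (1/2 : ℝ) * (ascPochhammer ℝ n).eval (-1/6 : ℝ) /
    ((ascPochhammer ℝ n).eval (2/3 : ℝ) * (Nat.factorial n))

lemma pochC_pos (n : ℕ) : 0 < (ascPochhammer ℝ n).eval (2/3 : ℝ) := by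
  induction n with
  | zero => simp [ascPochhammer_zero]
  | succ n ih => rw [ascPochhammer_succ_eval]; positivity

lemma p_rec (n : ℕ) :
    ((n : ℝ) + 1) * ((n : ℝ) + 2/3) * p (n+1) = ((n : ℝ) + 1/2) * ((n : ℝ) - 1/6) * p n := by
  have hC := (pochC_pos n).ne'
  have hF : ((Nat.factorial n : ℝ)) ≠ 0 := Nat.cast_ne_zero.2 n.factorial_ne_zero
  unfold p
  rw [ascPochhammer_succ_eval, ascPochhammer_succ_eval, ascPochhammer_succ_eval,
    Nat.factorial_succ, Nat.cast_mul]
  push_cast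
  field_simp
  ring

lemma p_zero : p 0 = 1 := by simp [p]

lemma p_one : p 1 = -(1/8) := by
  simp [p, ascPochhammer_one]
  norm_num

lemma p_abs_le (n : ℕ) : |p n| ≤ 1 := by
  induction n with
  | zero => simp [p_zero]
  | succ n ih =>
      have hrec := p_rec n
      have h1 : ((n:ℝ)+1) * ((n:ℝ)+2/3) > 0 := by positivity
      have hp : p (n+1) = ((n : ℝ) + 1/2) * ((n : ℝ) - 1/6) * p n / (((n:ℝ)+1) * ((n:ℝ)+2/3)) := by
        field_simp
        linarith [hrec]
      rw [hp, abs_div, abs_mul]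
      rw [div_le_one (by positivity)]
      have hn0 : (0:ℝ) ≤ (n:ℝ) := Nat.cast_nonneg n
      have habs : |((n : ℝ) + 1/2) * ((n : ℝ) - 1/6)| ≤ ((n:ℝ)+1) * ((n:ℝ)+2/3) := by
        rw [abs_mul]
        rw [abs_of_pos (by linarith)]
        rcases le_or_gt ((n:ℝ)) (1/6) with h | h
        · rw [abs_of_nonpos (by linarith)]
          nlinarith
        · rw [abs_of_pos (by linarith)]
          nlinarith
      calc |((n : ℝ) + 1/2) * ((n : ℝ) - 1/6)| * |p n|
          ≤ (((n:ℝ)+1) * ((n:ℝ)+2/3)) * 1 := by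
            apply mul_le_mul habs ih (abs_nonneg _) (by positivity)
        _ = |((n:ℝ)+1) * ((n:ℝ)+2/3)| * 1 := by rw [abs_of_pos h1]
        _ = |((n:ℝ)+1) * ((n:ℝ)+2/3)| := mul_one _


lemma summable_geom_shift (k : ℕ) : Summable (fun n : ℕ => ((n:ℝ)+1)^k * (1/2)^n) := by
  have h := summable_pow_mul_geometric_of_norm_lt_one (R := ℝ) k (r := (1/2:ℝ)) (by norm_num)
  have h' := (summable_nat_add_iff (f := fun n : ℕ => (n:ℝ)^k * (1/2)^n) 1).2 h
  have := h'.mul_left 2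
  apply this.congr
  intro n
  push_cast
  ring

lemma summable_aux {q : ℕ → ℝ} {C : ℝ} {k : ℕ} (hq : ∀ n, |q n| ≤ C * ((n:ℝ)+1)^k)
    {t : ℝ} (ht : |t| ≤ 1/2) : Summable (fun n : ℕ => q n * t ^ n) := by
  apply Summable.of_norm_bounded ((summable_geom_shift k).mul_left C)
  intro n
  rw [norm_mul, norm_pow]
  have h1 : ‖q n‖ ≤ C * ((n:ℝ)+1)^k := hq n
  have h2 : ‖t‖ ^ n ≤ (1/2) ^ n := pow_le_pow_left₀ (norm_nonneg t) ht n
  have hC : (0:ℝ) ≤ C * ((n:ℝ)+1)^k := le_trans (abs_nonneg _) h1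
  calc ‖q n‖ * ‖t‖^n ≤ (C * ((n:ℝ)+1)^k) * (1/2)^n := by
        apply mul_le_mul h1 h2 (by positivity) hC
    _ = C * (((n:ℝ)+1)^k * (1/2)^n) := by ring

lemma hasDerivAt_tsum_coeff (q : ℕ → ℝ) (C : ℝ) {k : ℕ} (hq : ∀ n, |q n| ≤ C * ((n:ℝ)+1)^k)
    {t : ℝ} (ht : |t| < 1/2) :
    HasDerivAt (fun y => ∑' n : ℕ, q n * y ^ n)
      (∑' n : ℕ, ((n:ℝ)+1) * q (n+1) * t ^ n) t := by
  have hCnn : 0 ≤ C := le_trans (abs_nonneg (q 0)) (by simpa using hq 0)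
  have hbound : ∀ (n : ℕ) (y : ℝ), |y| ≤ 1/2 →
      |q n * ((n:ℝ) * y ^ (n-1))| ≤ (2*C) * ((n:ℝ)+1)^(k+1) * (1/2)^n := by
    intro n y hy2
    have h2 : |y| ^ (n-1) ≤ (1/2) ^ (n-1) := pow_le_pow_left₀ (abs_nonneg y) hy2 _
    rw [abs_mul, abs_mul, abs_pow]
    cases n with
    | zero => simp; positivity
    | succ m =>
        simp only [Nat.add_sub_cancel] at h2 ⊢
        have hq' : |q (m+1)| ≤ C * ((m:ℝ)+1+1)^k := by
          have := hq (m+1); push_cast at this; linarith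
        have h3 : |((m+1:ℕ):ℝ)| = (m:ℝ)+1 := by
          rw [abs_of_nonneg (by positivity)]; push_cast; ring
        push_cast at h3 ⊢
        calc |q (m+1)| * (|(m:ℝ)+1| * |y|^m)
            ≤ (C * (((m:ℝ)+1+1)^k)) * (((m:ℝ)+1) * (1/2)^m) := by
              rw [h3]
              apply mul_le_mul hq'
              · apply mul_le_mul le_rfl h2 (by positivity) (by positivity)
              · positivity
              · positivity
          _ ≤ 2*C * ((m:ℝ)+1+1)^(k+1) * (1/2)^(m+1) := by
              have hpow : ((1:ℝ)/2)^(m+1) = (1/2)*(1/2)^m := by ring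
              rw [hpow]
              have h5 : (0:ℝ) < ((m:ℝ)+1+1) := by positivity
              have h7 : ((m:ℝ)+1+1)^(k+1) = ((m:ℝ)+1+1)^k * ((m:ℝ)+1+1) := by ring
              rw [h7]
              have h8 : (0:ℝ) ≤ (1/2:ℝ)^m := by positivity
              have h9 : (0:ℝ) ≤ C * ((m:ℝ)+1+1)^k := by positivity
              nlinarith [mul_le_mul_of_nonneg_left (le_of_lt (lt_add_one ((m:ℝ)+1))) h9]
  have key : HasDerivAt (fun y => ∑' n : ℕ, q n * y ^ n)
      (∑' n : ℕ, q n * ((n:ℝ) * t ^ (n-1))) t := by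
    apply hasDerivAt_tsum_of_isPreconnected
      (u := fun n : ℕ => (2*C) * ((n:ℝ)+1)^(k+1) * (1/2)^n)
      (g := fun (n : ℕ) (y : ℝ) => q n * y ^ n)
      (g' := fun (n : ℕ) (y : ℝ) => q n * ((n:ℝ) * y ^ (n-1)))
      (t := Ioo (-(1/2):ℝ) (1/2)) (y₀ := 0)
    · have := ((summable_geom_shift (k+1)).mul_left (2*C))
      apply this.congr; intro n; ring
    · exact isOpen_Ioo
    · exact (convex_Ioo _ _).isPreconnected
    · intro n y _
      exact (hasDerivAt_pow n y).const_mul (q n)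
    · intro n y hy
      have hy2 : |y| ≤ 1/2 := by
        rw [abs_le]; constructor <;> [linarith [hy.1]; linarith [hy.2]]
      exact hbound n y hy2
    · constructor <;> norm_num
    · exact summable_aux hq (by norm_num)
    · rw [mem_Ioo, ← abs_lt]; exact ht
  have hU : Summable (fun n : ℕ => (2*C) * ((n:ℝ)+1)^(k+1) * (1/2)^n) := by
    have h := (summable_geom_shift (k+1)).mul_left (2*C)
    exact h.congr (fun n => by ring)
  have hsum : Summable (fun n : ℕ => q n * ((n:ℝ) * t ^ (n-1))) :=
    Summable.of_norm_bounded hU (fun n => hbound n t (le_of_lt ht))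
  have : (∑' n : ℕ, q n * ((n:ℝ) * t ^ (n-1))) = ∑' n : ℕ, ((n:ℝ)+1) * q (n+1) * t ^ n := by
    rw [Summable.tsum_eq_zero_add hsum]
    simp only [Nat.cast_zero, zero_mul, mul_zero, zero_add]
    apply tsum_congr
    intro n
    simp only [Nat.add_sub_cancel]
    push_cast
    ring
  rwa [this] at key


noncomputable def F (t : ℝ) : ℝ := ∑' n : ℕ, p n * t ^ n
noncomputable def F1 (t : ℝ) : ℝ := ∑' n : ℕ, ((n : ℝ) + 1) * p (n+1) * t ^ n
noncomputable def F2 (t : ℝ) : ℝ :=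
  ∑' n : ℕ, ((n : ℝ) + 2) * ((n : ℝ) + 1) * p (n+2) * t ^ n

set_option maxHeartbeats 1000000

lemma bound0 : ∀ n : ℕ, |p n| ≤ 1 * ((n:ℝ)+1)^0 := fun n => by simpa using p_abs_le n

lemma bound1 : ∀ n : ℕ, |((n : ℝ) + 1) * p (n+1)| ≤ 1 * ((n:ℝ)+1)^1 := by
  intro n
  rw [abs_mul, abs_of_nonneg (by positivity : (0:ℝ) ≤ (n:ℝ)+1)]
  have := p_abs_le (n+1)
  nlinarith [abs_nonneg (p (n+1)), (by positivity : (0:ℝ) < (n:ℝ)+1)]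

lemma bound2 : ∀ n : ℕ, |((n : ℝ) + 2) * (((n:ℝ)+1) * p (n+2))| ≤ 2 * ((n:ℝ)+1)^2 := by
  intro n
  rw [abs_mul, abs_mul, abs_of_nonneg (by positivity : (0:ℝ) ≤ (n:ℝ)+2),
    abs_of_nonneg (by positivity : (0:ℝ) ≤ (n:ℝ)+1)]
  have h := p_abs_le (n+2)
  have h1 : (0:ℝ) < (n:ℝ)+1 := by positivity
  nlinarith [abs_nonneg (p (n+2))]

lemma hasDerivAt_F {t : ℝ} (ht : |t| < 1/2) : HasDerivAt F (F1 t) t :=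
  hasDerivAt_tsum_coeff p 1 bound0 ht

lemma hasDerivAt_F1 {t : ℝ} (ht : |t| < 1/2) : HasDerivAt F1 (F2 t) t := by
  have h := hasDerivAt_tsum_coeff (fun n => ((n : ℝ) + 1) * p (n+1)) 1 bound1 ht
  have : (∑' n : ℕ, ((n:ℝ)+1) * ((((n+1:ℕ)) : ℝ) + 1) * p (n+1+1) * t ^ n) = F2 t := by
    apply tsum_congr; intro n; push_cast; ring
  rw [show F1 = fun y => ∑' n : ℕ, ((n : ℝ) + 1) * p (n+1) * y ^ n from rfl]
  refine h.congr_deriv (Eq.symm ?_)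
  rw [← this]
  apply tsum_congr; intro n; push_cast; ring

lemma F_ode {t : ℝ} (ht : |t| < 1/2) :
    t * (1 - t) * F2 t + (2/3 - 4/3 * t) * F1 t + (1/12) * F t = 0 := by
  have ht' := le_of_lt ht
  -- summable families
  have sF2 : Summable (fun n : ℕ => ((n : ℝ) + 2) * ((n : ℝ) + 1) * p (n+2) * t ^ n) := by
    apply summable_aux (C := 2) (k := 2) _ ht'
    intro n; have := bound2 n; calc |((n : ℝ) + 2) * ((n : ℝ) + 1) * p (n+2)|
        = |((n : ℝ) + 2) * (((n:ℝ)+1) * p (n+2))| := by ring_nf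
      _ ≤ 2 * ((n:ℝ)+1)^2 := bound2 n
  have sF1 : Summable (fun n : ℕ => ((n : ℝ) + 1) * p (n+1) * t ^ n) :=
    summable_aux (C := 1) (k := 1) bound1 ht'
  have sF0 : Summable (fun n : ℕ => p n * t ^ n) :=
    summable_aux (C := 1) (k := 0) bound0 ht'
  have bA : ∀ n : ℕ, |((n:ℝ)+1) * (n:ℝ) * p (n+1)| ≤ 1 * ((n:ℝ)+1)^2 := by
    intro n
    rw [abs_mul, abs_mul, abs_of_nonneg (by positivity : (0:ℝ) ≤ (n:ℝ)+1),
      abs_of_nonneg (Nat.cast_nonneg n)]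
    have := p_abs_le (n+1)
    have h1 : (0:ℝ) ≤ (n:ℝ) := Nat.cast_nonneg n
    nlinarith [abs_nonneg (p (n+1))]
  have sA : Summable (fun n : ℕ => ((n:ℝ)+1) * (n:ℝ) * p (n+1) * t ^ n) :=
    summable_aux (C := 1) (k := 2) bA ht'
  have bC : ∀ n : ℕ, |(n:ℝ) * ((n:ℝ)-1) * p n| ≤ 1 * ((n:ℝ)+1)^2 := by
    intro n
    rw [abs_mul]
    have h1 : (0:ℝ) ≤ (n:ℝ) := Nat.cast_nonneg n
    have h2 : |(n:ℝ) * ((n:ℝ)-1)| ≤ ((n:ℝ)+1)^2 := by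
      rw [abs_mul, abs_of_nonneg h1]
      rcases le_or_gt 1 ((n:ℝ)) with h | h
      · rw [abs_of_nonneg (by linarith)]; nlinarith
      · rw [abs_of_neg (by linarith)]; nlinarith
    have := p_abs_le n
    nlinarith [abs_nonneg (p n), abs_nonneg ((n:ℝ) * ((n:ℝ)-1)), abs_mul ((n:ℝ)) ((n:ℝ)-1)]
  have sC : Summable (fun n : ℕ => (n:ℝ) * ((n:ℝ)-1) * p n * t ^ n) :=
    summable_aux (C := 1) (k := 2) bC ht'
  have bD : ∀ n : ℕ, |(4/3) * (n:ℝ) * p n| ≤ 2 * ((n:ℝ)+1)^1 := by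
    intro n
    rw [abs_mul, abs_mul]
    have h1 : (0:ℝ) ≤ (n:ℝ) := Nat.cast_nonneg n
    rw [abs_of_nonneg h1, abs_of_nonneg (by norm_num : (0:ℝ) ≤ (4:ℝ)/3)]
    have := p_abs_le n
    nlinarith [abs_nonneg (p n)]
  have sD : Summable (fun n : ℕ => (4/3) * (n:ℝ) * p n * t ^ n) :=
    summable_aux (C := 2) (k := 1) bD ht'
  -- identifications
  have e1 : t * F2 t = ∑' n : ℕ, ((n:ℝ)+1) * (n:ℝ) * p (n+1) * t ^ n := by
    rw [Summable.tsum_eq_zero_add sA]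
    rw [F2, ← tsum_mul_left]
    simp only [Nat.cast_zero, zero_mul, mul_zero, zero_add, zero_mul]
    norm_num
    apply tsum_congr; intro n; push_cast; ring
  have e3 : t^2 * F2 t = ∑' n : ℕ, (n:ℝ) * ((n:ℝ)-1) * p n * t ^ n := by
    rw [Summable.tsum_eq_zero_add sC]
    have sC1 : Summable (fun n : ℕ => ((n+1:ℕ):ℝ) * (((n+1:ℕ):ℝ)-1) * p (n+1) * t ^ (n+1)) :=
      (summable_nat_add_iff 1).2 sC
    rw [Summable.tsum_eq_zero_add sC1]
    rw [F2, ← tsum_mul_left]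
    simp only [Nat.cast_zero, Nat.cast_one, zero_mul, mul_zero, zero_add]
    norm_num
    apply tsum_congr; intro n; push_cast; ring
  have e4 : (4/3) * t * F1 t = ∑' n : ℕ, (4/3) * (n:ℝ) * p n * t ^ n := by
    rw [Summable.tsum_eq_zero_add sD]
    rw [F1, ← tsum_mul_left]
    simp only [Nat.cast_zero, mul_zero, zero_mul, zero_add]
    norm_num
    apply tsum_congr; intro n; push_cast; ring
  -- main computation
  have lhs_eq : t * (1 - t) * F2 t + (2/3 - 4/3 * t) * F1 t + (1/12) * F t
      = (∑' n : ℕ, (((n:ℝ)+1) * (n:ℝ) * p (n+1) * t ^ n + (2/3) * (((n:ℝ)+1) * p (n+1) * t^n)))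
      - (∑' n : ℕ, ((n:ℝ) * ((n:ℝ)-1) * p n * t ^ n + (4/3) * (n:ℝ) * p n * t ^ n
          - (1/12) * (p n * t ^ n))) := by
    rw [Summable.tsum_add sA (sF1.mul_left (2/3)), Summable.tsum_sub (sC.add sD) (sF0.mul_left (1/12)),
      Summable.tsum_add sC sD]
    rw [tsum_mul_left, tsum_mul_left, ← F1, ← F]
    have expand : t * (1 - t) * F2 t = t * F2 t - t^2 * F2 t := by ring
    rw [expand, e1, e3]
    linear_combination -e4
  rw [lhs_eq]
  have term_eq : ∀ n : ℕ,
      (((n:ℝ)+1) * (n:ℝ) * p (n+1) * t ^ n + (2/3) * (((n:ℝ)+1) * p (n+1) * t^n))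
      = ((n:ℝ) * ((n:ℝ)-1) * p n * t ^ n + (4/3) * (n:ℝ) * p n * t ^ n
          - (1/12) * (p n * t ^ n)) := by
    intro n
    linear_combination (t ^ n) * p_rec n
  rw [tsum_congr term_eq]
  ring


noncomputable def z (x : ℝ) : ℝ := x * (x + 2) ^ 3 / (2 * x + 1) ^ 3
noncomputable def zd (x : ℝ) : ℝ := 2 * (x + 2) ^ 2 * (x - 1) ^ 2 / (2 * x + 1) ^ 4
noncomputable def zdd (x : ℝ) : ℝ :=
  (4 * (x + 2) * (x - 1) * (2 * x + 1) ^ 2 - 16 * (x + 2) ^ 2 * (x - 1) ^ 2) / (2 * x + 1) ^ 5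

variable {x : ℝ} (hx : |x| < 1/25)

lemma hx1 (hx : |x| < 1/25) : 0 < 2 * x + 1 := by
  have := abs_lt.1 hx; linarith [this.1]

lemma hasDerivAt_z (hx : |x| < 1/25) : HasDerivAt z (zd x) x := by
  have h1 := hx1 hx
  have hne : ((2 * x + 1) ^ 3 : ℝ) ≠ 0 := by positivity
  have hd : HasDerivAt (fun x : ℝ => x * (x + 2) ^ 3)
      ((x + 2) ^ 3 + x * (3 * (x + 2) ^ 2)) x := by
    have := (hasDerivAt_id x).mul (((hasDerivAt_id x).add_const 2).pow 3)
    refine this.congr_deriv (Eq.symm ?_); simp only [id_eq, Pi.pow_apply]; push_cast; ring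
  have hden : HasDerivAt (fun x : ℝ => (2 * x + 1) ^ 3) (3 * (2 * x + 1) ^ 2 * 2) x := by
    have := (((hasDerivAt_id x).const_mul 2).add_const 1).pow 3
    refine this.congr_deriv (Eq.symm ?_); simp only [id_eq, Pi.pow_apply]; push_cast; ring
  have := hd.div hden hne
  refine this.congr_deriv (Eq.symm ?_)
  unfold zd
  field_simp
  ring

lemma hasDerivAt_zd (hx : |x| < 1/25) : HasDerivAt zd (zdd x) x := by
  have h1 := hx1 hx
  have hne : ((2 * x + 1) ^ 4 : ℝ) ≠ 0 := by positivity
  have hd : HasDerivAt (fun x : ℝ => 2 * (x + 2) ^ 2 * (x - 1) ^ 2)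
      (2 * (2 * (x + 2)) * (x - 1) ^ 2 + 2 * (x + 2) ^ 2 * (2 * (x - 1))) x := by
    have := ((((hasDerivAt_id x).add_const 2).pow 2).const_mul 2).mul
      (((hasDerivAt_id x).add_const (-1)).pow 2)
    refine this.congr_deriv (Eq.symm ?_)
    simp only [id_eq, Pi.pow_apply]; push_cast; ring
  have hden : HasDerivAt (fun x : ℝ => (2 * x + 1) ^ 4) (4 * (2 * x + 1) ^ 3 * 2) x := by
    have := (((hasDerivAt_id x).const_mul 2).add_const 1).pow 4
    refine this.congr_deriv (Eq.symm ?_); simp only [id_eq, Pi.pow_apply]; push_cast; ring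
  have := hd.div hden hne
  refine this.congr_deriv (Eq.symm ?_)
  unfold zdd
  field_simp
  ring

lemma z_small (hx : |x| < 1/25) : |z x| < 1/2 := by
  have h := abs_lt.1 hx
  have h1 := hx1 hx
  have hd : (0:ℝ) < (2*x+1)^3 := by positivity
  rw [abs_lt]
  unfold z
  constructor
  · rw [lt_div_iff₀ hd]
    nlinarith [h.1, h.2, sq_nonneg x, sq_nonneg (x+1), sq_nonneg (x-1)]
  · rw [div_lt_iff₀ hd]
    nlinarith [h.1, h.2, sq_nonneg x, sq_nonneg (x+1), sq_nonneg (x-1)]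

lemma zd_pos (hx : |x| < 1/25) : 0 < zd x := by
  have h := abs_lt.1 hx
  have h1 := hx1 hx
  unfold zd
  have hx2 : (0:ℝ) < x + 2 := by linarith
  have hx3 : (0:ℝ) < (x - 1)^2 := by nlinarith
  exact div_pos (by nlinarith [mul_pos (mul_pos (by nlinarith : (0:ℝ) < 2*(x+2)^2) hx3) (by norm_num : (0:ℝ) < 1)]) (by positivity)

lemma one_sub_z_pos (hx : |x| < 1/25) : 0 < 1 - z x := by
  have := (abs_lt.1 (z_small hx)).2; linarith

lemma z_pos_of_pos (hx : |x| < 1/25) (hx0 : 0 < x) : 0 < z x := by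
  have h1 := hx1 hx
  have h := abs_lt.1 hx
  unfold z
  have : (0:ℝ) < x + 2 := by linarith
  positivity

lemma z_neg_of_neg (hx : |x| < 1/25) (hx0 : x < 0) : z x < 0 := by
  have h1 := hx1 hx
  have h := abs_lt.1 hx
  unfold z
  apply div_neg_of_neg_of_pos
  · have : (0:ℝ) < x + 2 := by linarith
    nlinarith [pow_pos this 3]
  · positivity


end Darb8

namespace Darb8

noncomputable def H (x : ℝ) : ℝ := F (z x)
noncomputable def H1 (x : ℝ) : ℝ := F1 (z x) * zd x
noncomputable def H2 (x : ℝ) : ℝ := F2 (z x) * zd x ^ 2 + F1 (z x) * zdd x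

noncomputable def G (x : ℝ) : ℝ := (1 + 2 * x) ^ (-(1/2) : ℝ)
noncomputable def Ga (x : ℝ) : ℝ := -(1 + 2 * x) ^ (-(3/2) : ℝ)
noncomputable def Gb (x : ℝ) : ℝ := 3 * (1 + 2 * x) ^ (-(5/2) : ℝ)

noncomputable def W (x : ℝ) : ℝ := G x * H1 x - Ga x * H x

noncomputable def P₀ (x : ℝ) : ℝ := z x * (1 - z x) * zd x
noncomputable def Q₀ (x : ℝ) : ℝ :=
  -(z x * (1 - z x) * zdd x) + (2/3 - 4/3 * z x) * zd x ^ 2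
noncomputable def R₀ (x : ℝ) : ℝ := (1/12) * zd x ^ 3

variable {x : ℝ}

lemma hasDerivAt_H (hx : |x| < 1/25) : HasDerivAt H (H1 x) x :=
  (hasDerivAt_F (z_small hx)).comp x (hasDerivAt_z hx)

lemma hasDerivAt_H1 (hx : |x| < 1/25) : HasDerivAt H1 (H2 x) x := by
  have h1 := ((hasDerivAt_F1 (z_small hx)).comp x (hasDerivAt_z hx)).mul (hasDerivAt_zd hx)
  refine h1.congr_deriv (Eq.symm ?_)
  unfold H2
  simp only [Function.comp]
  ring

lemma one_add_pos (hx : |x| < 1/25) : (0:ℝ) < 1 + 2 * x := by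
  have := hx1 hx; linarith

lemma hasDerivAt_G (hx : |x| < 1/25) : HasDerivAt G (Ga x) x := by
  have hb := one_add_pos hx
  have inner : HasDerivAt (fun y : ℝ => 1 + 2 * y) 2 x := by
    have := ((hasDerivAt_id x).const_mul 2).const_add 1
    refine this.congr_deriv (Eq.symm ?_) <;> simp
  have outer := Real.hasDerivAt_rpow_const (x := 1 + 2*x) (p := (-(1/2) : ℝ)) (Or.inl hb.ne')
  have := outer.comp x inner
  refine this.congr_deriv (Eq.symm ?_)
  unfold Ga
  rw [show (-(1/2) : ℝ) - 1 = -(3/2) by norm_num]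
  ring

lemma hasDerivAt_Ga (hx : |x| < 1/25) : HasDerivAt Ga (Gb x) x := by
  have hb := one_add_pos hx
  have inner : HasDerivAt (fun y : ℝ => 1 + 2 * y) 2 x := by
    have := ((hasDerivAt_id x).const_mul 2).const_add 1
    refine this.congr_deriv (Eq.symm ?_) <;> simp
  have outer := Real.hasDerivAt_rpow_const (x := 1 + 2*x) (p := (-(3/2) : ℝ)) (Or.inl hb.ne')
  have := (outer.comp x inner).neg
  refine this.congr_deriv (Eq.symm ?_)
  unfold Gb
  rw [show (-(3/2) : ℝ) - 1 = -(5/2) by norm_num]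
  ring

lemma H_ode (hx : |x| < 1/25) : P₀ x * H2 x + Q₀ x * H1 x + R₀ x * H x = 0 := by
  have h := F_ode (z_small hx)
  unfold P₀ Q₀ R₀ H2 H1 H
  linear_combination (zd x)^3 * h

lemma G_ode (hx : |x| < 1/25) : P₀ x * Gb x + Q₀ x * Ga x + R₀ x * G x = 0 := by
  have hb := one_add_pos hx
  have hw : (0:ℝ) < (1 + 2*x) ^ (-(1/2) : ℝ) := Real.rpow_pos_of_pos hb _
  have h3 : (1 + 2*x) ^ (-(3/2) : ℝ) = (1+2*x)⁻¹ * (1 + 2*x) ^ (-(1/2) : ℝ) := by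
    rw [show (-(3/2) : ℝ) = -1 + -(1/2) by norm_num, Real.rpow_add hb,
      Real.rpow_neg_one]
  have h5 : (1 + 2*x) ^ (-(5/2) : ℝ) = ((1+2*x)^2)⁻¹ * (1 + 2*x) ^ (-(1/2) : ℝ) := by
    rw [show (-(5/2) : ℝ) = -2 + -(1/2) by norm_num, Real.rpow_add hb]
    norm_num [Real.rpow_neg hb.le, Real.rpow_two]
  have hpoly : 3 * P₀ x - Q₀ x * (1 + 2*x) + R₀ x * (1 + 2*x)^2 = 0 := by
    unfold P₀ Q₀ R₀ z zd zdd
    have hne : (2*x+1) ≠ 0 := (hx1 hx).ne'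
    have h2 : x * 2 + 1 ≠ 0 := by contrapose! hne; linarith
    field_simp
    ring
  unfold G Ga Gb
  rw [h3, h5]
  have hne : (1 + 2*x) ≠ 0 := hb.ne'
  set w := (1 + 2*x) ^ (-(1/2) : ℝ) with hwdef
  field_simp
  linear_combination w * hpoly

end Darb8

namespace Darb8
variable {x : ℝ}

lemma hasDerivAt_W (hx : |x| < 1/25) :
    HasDerivAt W (G x * H2 x - Gb x * H x) x := by
  have h := ((hasDerivAt_G hx).mul (hasDerivAt_H1 hx)).sub
    ((hasDerivAt_Ga hx).mul (hasDerivAt_H hx))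
  refine h.congr_deriv (Eq.symm ?_)
  ring

lemma W_rel (hx : |x| < 1/25) :
    P₀ x * (G x * H2 x - Gb x * H x) + Q₀ x * W x = 0 := by
  unfold W
  linear_combination (G x) * H_ode hx - (H x) * G_ode hx

lemma h0small : |(0:ℝ)| < 1/25 := by norm_num

lemma z0 : z 0 = 0 := by norm_num [z]

lemma zd0 : zd 0 = 8 := by norm_num [zd]

/-- the integrating-factor function on the right of 0 -/
noncomputable def psiP (y : ℝ) : ℝ := W y * (z y * (1 - z y)) ^ ((2:ℝ)/3) / zd y
/-- the integrating-factor function on the left of 0 -/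
noncomputable def psiM (y : ℝ) : ℝ := W y * (z y * (z y - 1)) ^ ((2:ℝ)/3) / zd y

lemma psiP_deriv (hx : |x| < 1/25) (hx0 : 0 < x) : HasDerivAt psiP 0 x := by
  have hu : 0 < z x * (1 - z x) := mul_pos (z_pos_of_pos hx hx0) (one_sub_z_pos hx)
  have hzd := zd_pos hx
  have hU : HasDerivAt (fun y => z y * (1 - z y)) (zd x * (1 - 2 * z x)) x := by
    have := (hasDerivAt_z hx).mul ((hasDerivAt_z hx).const_sub 1)
    refine this.congr_deriv (Eq.symm ?_)
    ring
  have hA : HasDerivAt (fun y => (z y * (1 - z y)) ^ ((2:ℝ)/3))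
      (((2:ℝ)/3) * (z x * (1 - z x)) ^ ((2:ℝ)/3 - 1) * (zd x * (1 - 2 * z x))) x :=
    ((Real.hasDerivAt_rpow_const (Or.inl hu.ne')).comp x hU :)
  have hprod := ((hasDerivAt_W hx).mul hA).div (hasDerivAt_zd hx) hzd.ne'
  refine hprod.congr_deriv (Eq.symm ?_)
  simp only [Pi.mul_apply]
  have hv : (z x * (1 - z x)) ^ ((2:ℝ)/3)
      = (z x * (1 - z x)) * (z x * (1 - z x)) ^ ((2:ℝ)/3 - 1) := by
    nth_rewrite 1 [show ((2:ℝ)/3) = 1 + ((2:ℝ)/3 - 1) by ring]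
    rw [Real.rpow_add hu, Real.rpow_one]
  rw [hv, eq_comm, div_eq_iff (by positivity)]
  have hrel := W_rel hx
  unfold P₀ Q₀ at hrel
  linear_combination ((z x * (1 - z x)) ^ ((2:ℝ)/3 - 1)) * hrel

lemma psiM_deriv (hx : |x| < 1/25) (hx0 : x < 0) : HasDerivAt psiM 0 x := by
  have hz := z_neg_of_neg hx hx0
  have hu : 0 < z x * (z x - 1) := by nlinarith [one_sub_z_pos hx]
  have hzd := zd_pos hx
  have hU : HasDerivAt (fun y => z y * (z y - 1)) (zd x * (2 * z x - 1)) x := by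
    have := (hasDerivAt_z hx).mul ((hasDerivAt_z hx).sub_const 1)
    refine this.congr_deriv (Eq.symm ?_)
    ring
  have hA : HasDerivAt (fun y => (z y * (z y - 1)) ^ ((2:ℝ)/3))
      (((2:ℝ)/3) * (z x * (z x - 1)) ^ ((2:ℝ)/3 - 1) * (zd x * (2 * z x - 1))) x :=
    ((Real.hasDerivAt_rpow_const (Or.inl hu.ne')).comp x hU :)
  have hprod := ((hasDerivAt_W hx).mul hA).div (hasDerivAt_zd hx) hzd.ne'
  refine hprod.congr_deriv (Eq.symm ?_)
  simp only [Pi.mul_apply]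
  have hv : (z x * (z x - 1)) ^ ((2:ℝ)/3)
      = (z x * (z x - 1)) * (z x * (z x - 1)) ^ ((2:ℝ)/3 - 1) := by
    nth_rewrite 1 [show ((2:ℝ)/3) = 1 + ((2:ℝ)/3 - 1) by ring]
    rw [Real.rpow_add hu, Real.rpow_one]
  rw [hv, eq_comm, div_eq_iff (by positivity)]
  have hrel := W_rel hx
  unfold P₀ Q₀ at hrel
  linear_combination (-(z x * (z x - 1)) ^ ((2:ℝ)/3 - 1)) * hrel

lemma W_zero_pos : ∀ y ∈ Ioo (0:ℝ) (1/25), W y = 0 := by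
  intro y hy
  have hyx : |y| < 1/25 := by rw [abs_lt]; exact ⟨by linarith [hy.1], hy.2⟩
  -- psiP is constant on Ioo 0 (1/25)
  have hconst : ∀ t ∈ Ioo (0:ℝ) (1/25), psiP t = psiP y := by
    intro t ht
    have hbound := Convex.norm_image_sub_le_of_norm_hasDerivWithin_le
      (f := psiP) (f' := fun _ => 0) (C := 0) (s := Ioo (0:ℝ) (1/25))
      (fun u hu => (psiP_deriv (by rw [abs_lt]; exact ⟨by linarith [hu.1], hu.2⟩)
        hu.1).hasDerivWithinAt)
      (fun u _ => by simp) (convex_Ioo _ _) hy ht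
    have := hbound
    simp only [zero_mul] at this
    have h2 : ‖psiP t - psiP y‖ ≤ 0 := this
    have := norm_le_zero_iff.1 h2
    linarith [sub_eq_zero.1 this, (sub_eq_zero.1 this).le]
  -- limit of psiP at 0+ is 0
  have hcW : ContinuousAt W 0 := (hasDerivAt_W h0small).continuousAt
  have hcz : ContinuousAt z 0 := (hasDerivAt_z h0small).continuousAt
  have hczd : ContinuousAt zd 0 := (hasDerivAt_zd h0small).continuousAt
  have hcu : ContinuousAt (fun y => z y * (1 - z y)) 0 :=
    hcz.mul (continuousAt_const.sub hcz)
  have hcA : ContinuousAt (fun y => (z y * (1 - z y)) ^ ((2:ℝ)/3)) 0 :=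
    hcu.rpow_const (Or.inr (by norm_num))
  have hcpsi : ContinuousAt psiP 0 := by
    apply ContinuousAt.div (hcW.mul hcA) hczd
    rw [zd0]; norm_num
  have hpsi0 : psiP 0 = 0 := by
    unfold psiP
    rw [z0, zd0]
    norm_num
  have h1 : Tendsto psiP (𝓝[>] (0:ℝ)) (𝓝 0) := by
    have := (hcpsi.continuousWithinAt (s := Ioi (0:ℝ))).tendsto
    rwa [hpsi0] at this
  have h2 : Tendsto psiP (𝓝[>] (0:ℝ)) (𝓝 (psiP y)) := by
    apply Tendsto.congr' _ tendsto_const_nhds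
    filter_upwards [Ioo_mem_nhdsGT_of_mem
      (show (0:ℝ) ∈ Ico (0:ℝ) (1/25) from ⟨le_refl _, by norm_num⟩)] with t ht
    exact (hconst t ht).symm
  have hy0 : psiP y = 0 := tendsto_nhds_unique h2 h1
  -- conclude W y = 0
  have hu : 0 < z y * (1 - z y) := mul_pos (z_pos_of_pos hyx hy.1) (one_sub_z_pos hyx)
  have hA : 0 < (z y * (1 - z y)) ^ ((2:ℝ)/3) := Real.rpow_pos_of_pos hu _
  have hzd := zd_pos hyx
  unfold psiP at hy0
  rw [div_eq_zero_iff] at hy0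
  rcases hy0 with h | h
  · rcases mul_eq_zero.1 h with h' | h'
    · exact h'
    · exact absurd h' hA.ne'
  · exact absurd h hzd.ne'

lemma W_zero_neg : ∀ y ∈ Ioo (-(1/25) : ℝ) 0, W y = 0 := by
  intro y hy
  have hyx : |y| < 1/25 := by rw [abs_lt]; exact ⟨hy.1, by linarith [hy.2]⟩
  have hconst : ∀ t ∈ Ioo (-(1/25):ℝ) 0, psiM t = psiM y := by
    intro t ht
    have hbound := Convex.norm_image_sub_le_of_norm_hasDerivWithin_le
      (f := psiM) (f' := fun _ => 0) (C := 0) (s := Ioo (-(1/25):ℝ) 0)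
      (fun u hu => (psiM_deriv (by rw [abs_lt]; exact ⟨hu.1, by linarith [hu.2]⟩)
        hu.2).hasDerivWithinAt)
      (fun u _ => by simp) (convex_Ioo _ _) hy ht
    simp only [zero_mul] at hbound
    have := norm_le_zero_iff.1 hbound
    linarith [sub_eq_zero.1 this, (sub_eq_zero.1 this).le]
  have hcW : ContinuousAt W 0 := (hasDerivAt_W h0small).continuousAt
  have hcz : ContinuousAt z 0 := (hasDerivAt_z h0small).continuousAt
  have hczd : ContinuousAt zd 0 := (hasDerivAt_zd h0small).continuousAt
  have hcu : ContinuousAt (fun y => z y * (z y - 1)) 0 :=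
    hcz.mul (hcz.sub continuousAt_const)
  have hcA : ContinuousAt (fun y => (z y * (z y - 1)) ^ ((2:ℝ)/3)) 0 :=
    hcu.rpow_const (Or.inr (by norm_num))
  have hcpsi : ContinuousAt psiM 0 := by
    apply ContinuousAt.div (hcW.mul hcA) hczd
    rw [zd0]; norm_num
  have hpsi0 : psiM 0 = 0 := by
    unfold psiM
    rw [z0, zd0]
    norm_num
  have h1 : Tendsto psiM (𝓝[<] (0:ℝ)) (𝓝 0) := by
    have := (hcpsi.continuousWithinAt (s := Iio (0:ℝ))).tendsto
    rwa [hpsi0] at this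
  have h2 : Tendsto psiM (𝓝[<] (0:ℝ)) (𝓝 (psiM y)) := by
    apply Tendsto.congr' _ tendsto_const_nhds
    filter_upwards [Ioo_mem_nhdsLT_of_mem
      (show (0:ℝ) ∈ Ioc (-(1/25):ℝ) 0 from ⟨by norm_num, le_refl _⟩)] with t ht
    exact (hconst t ht).symm
  have hy0 : psiM y = 0 := tendsto_nhds_unique h2 h1
  have hzneg := z_neg_of_neg hyx hy.2
  have hu : 0 < z y * (z y - 1) := by nlinarith [one_sub_z_pos hyx]
  have hA : 0 < (z y * (z y - 1)) ^ ((2:ℝ)/3) := Real.rpow_pos_of_pos hu _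
  have hzd := zd_pos hyx
  unfold psiM at hy0
  rw [div_eq_zero_iff] at hy0
  rcases hy0 with h | h
  · rcases mul_eq_zero.1 h with h' | h'
    · exact h'
    · exact absurd h' hA.ne'
  · exact absurd h hzd.ne'

lemma F_zero : F 0 = 1 := by
  unfold F
  rw [tsum_eq_single 0 (fun n hn => by
    rw [zero_pow hn, mul_zero])]
  simp [p_zero]

lemma F1_zero : F1 0 = -(1/8) := by
  unfold F1
  rw [tsum_eq_single 0 (fun n hn => by
    rw [zero_pow hn, mul_zero])]
  simp [p_one]

lemma W_zero (hx : |x| < 1/25) : W x = 0 := by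
  rcases lt_trichotomy x 0 with h | h | h
  · exact W_zero_neg x ⟨(abs_lt.1 hx).1, h⟩
  · subst h
    unfold W H1 H
    rw [z0, F_zero, F1_zero, zd0]
    unfold G Ga
    norm_num
  · exact W_zero_pos x ⟨h, (abs_lt.1 hx).2⟩

lemma key_rel (hx : |x| < 1/25) : (1 + 2*x) * H1 x + H x = 0 := by
  have hb := one_add_pos hx
  have hW := W_zero hx
  unfold W G Ga at hW
  have hs : (0:ℝ) < (1 + 2*x) ^ ((1:ℝ)/2) := Real.rpow_pos_of_pos hb _
  have hminus : (1 + 2*x) ^ (-(1/2) : ℝ) = ((1 + 2*x) ^ ((1:ℝ)/2))⁻¹ := by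
    rw [← Real.rpow_neg hb.le]
  have hminus3 : (1 + 2*x) ^ (-(3/2) : ℝ)
      = (((1 + 2*x) ^ ((1:ℝ)/2)) * ((1 + 2*x) ^ ((1:ℝ)/2)) * ((1 + 2*x) ^ ((1:ℝ)/2)))⁻¹ := by
    rw [← Real.rpow_add hb, ← Real.rpow_add hb, ← Real.rpow_neg hb.le]
    norm_num
  have hssq : ((1 + 2*x) ^ ((1:ℝ)/2)) * ((1 + 2*x) ^ ((1:ℝ)/2)) = 1 + 2*x := by
    rw [← Real.rpow_add hb]
    norm_num
  rw [hminus, hminus3] at hW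
  set s := (1 + 2*x) ^ ((1:ℝ)/2) with hsdef
  field_simp at hW
  have h2 : s * ((1 + 2*x) * H1 x + H x) = 0 := by
    linear_combination s * hW - (H1 x)*s*hssq
  rcases mul_eq_zero.1 h2 with h | h
  · exact absurd h hs.ne'
  · exact h

noncomputable def phi (y : ℝ) : ℝ := H y * (1 + 2*y) ^ ((1:ℝ)/2)

lemma phi_deriv (hx : |x| < 1/25) : HasDerivAt phi 0 x := by
  have hb := one_add_pos hx
  have inner : HasDerivAt (fun y : ℝ => 1 + 2 * y) 2 x := by
    have := ((hasDerivAt_id x).const_mul 2).const_add 1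
    refine this.congr_deriv (Eq.symm ?_)
    simp
  have outer := Real.hasDerivAt_rpow_const (x := 1 + 2*x) (p := ((1:ℝ)/2)) (Or.inl hb.ne')
  have hpow := outer.comp x inner
  have h := (hasDerivAt_H hx).mul hpow
  refine h.congr_deriv (Eq.symm ?_)
  simp only [Function.comp_apply]
  -- 0 = H1 x * (1+2x)^(1/2) + H x * ((1/2)*(1+2x)^(1/2-1)*2)
  have hkey := key_rel hx
  have hs : (0:ℝ) < (1 + 2*x) ^ ((1:ℝ)/2) := Real.rpow_pos_of_pos hb _
  have hhalf : ((1:ℝ)/2 - 1 : ℝ) = -(1/2) := by norm_num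
  have hminus : (1 + 2*x) ^ (-(1/2) : ℝ) = ((1 + 2*x) ^ ((1:ℝ)/2))⁻¹ := by
    rw [← Real.rpow_neg hb.le]
  have hssq : ((1 + 2*x) ^ ((1:ℝ)/2)) * ((1 + 2*x) ^ ((1:ℝ)/2)) = 1 + 2*x := by
    rw [← Real.rpow_add hb]
    norm_num
  rw [hhalf, hminus]
  rw [eq_comm]
  have hne : ((1 + 2*x) ^ ((1:ℝ)/2)) ≠ 0 := hs.ne'
  field_simp
  linear_combination hkey + (H1 x)*hssq

end Darb8

namespace Darb8
variable {x : ℝ}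

lemma H_eq (hx : |x| < 1/25) : H x = (1 + 2*x) ^ (-(1/2) : ℝ) := by
  have hb := one_add_pos hx
  have h0 : phi 0 = 1 := by
    unfold phi H
    rw [z0, F_zero]
    norm_num
  have hconst : phi x = phi 0 := by
    have hbnd := Convex.norm_image_sub_le_of_norm_hasDerivWithin_le
      (f := phi) (f' := fun _ => 0) (C := 0) (s := Ioo (-(1/25):ℝ) (1/25))
      (fun u hu => (phi_deriv (abs_lt.2 ⟨hu.1, hu.2⟩)).hasDerivWithinAt)
      (fun u _ => by simp) (convex_Ioo _ _)
      (show (0:ℝ) ∈ Ioo (-(1/25):ℝ) (1/25) from ⟨by norm_num, by norm_num⟩)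
      (show x ∈ Ioo (-(1/25):ℝ) (1/25) from ⟨(abs_lt.1 hx).1, (abs_lt.1 hx).2⟩)
    simp only [zero_mul] at hbnd
    have := norm_le_zero_iff.1 hbnd
    linarith [sub_eq_zero.1 this, (sub_eq_zero.1 this).le]
  rw [h0] at hconst
  unfold phi at hconst
  have hminus : (1 + 2*x) ^ (-(1/2) : ℝ) = ((1 + 2*x) ^ ((1:ℝ)/2))⁻¹ := by
    rw [← Real.rpow_neg hb.le]
  rw [hminus]
  exact eq_inv_of_mul_eq_one_left (by linarith [hconst, mul_comm (H x) ((1 + 2*x) ^ ((1:ℝ)/2))])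

end Darb8

/-- The Gauss hypergeometric series `₂F₁(a, b; c; x)`, as a sum over `n` of
`(a)ₙ (b)ₙ / ((c)ₙ n!) · xⁿ` where `(a)ₙ` is the rising factorial. -/
noncomputable def hyp (a b c x : ℝ) : ℝ :=
  ∑' n : ℕ, ((ascPochhammer ℝ n).eval a * (ascPochhammer ℝ n).eval b /
    ((ascPochhammer ℝ n).eval c * (Nat.factorial n))) * x ^ n

theorem stmt_8 :
    ∃ ε > (0 : ℝ), ∀ x : ℝ, |x| < ε →
      hyp (1/2) (-1/6) (2/3) (x * (x + 2) ^ 3 / (2 * x + 1) ^ 3) =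
        (1 + 2 * x) ^ (-(1/2) : ℝ) := by
  refine ⟨1/25, by norm_num, fun x hx => ?_⟩
  exact Darb8.H_eq hx
end

section
/- For x real with |x| sufficiently small, ₂F₁(7/24, −1/24; 3/4; 108 x (x−1)⁴/(x²+14x+1)³) = (1+14x+x²)^{−1/8}, where ₂F₁ is the Gauss hypergeometric series. -/
namespace Dbx

/-- coefficient of the hypergeometric series -/
noncomputable def cf (n : ℕ) : ℝ :=
  (ascPochhammer ℝ n).eval (7/24) * (ascPochhammer ℝ n).eval (-1/24) /
    ((ascPochhammer ℝ n).eval (3/4) * (Nat.factorial n))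

lemma hyp_eq (t : ℝ) : hyp (7/24) (-1/24) (3/4) t = ∑' n, cf n * t ^ n := rfl

lemma poch_abs_le {t : ℝ} (ht : |t| ≤ 1) (n : ℕ) :
    |(ascPochhammer ℝ n).eval t| ≤ (Nat.factorial n : ℝ) := by
  induction n with
  | zero => simp
  | succ n ih =>
    rw [ascPochhammer_succ_eval, abs_mul, Nat.factorial_succ, Nat.cast_mul]
    have h1 : |t + (n:ℝ)| ≤ (n:ℝ) + 1 := by
      have := abs_add_le t (n:ℝ)
      have : |(n:ℝ)| = (n:ℝ) := abs_of_nonneg (Nat.cast_nonneg n)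
      calc |t + (n:ℝ)| ≤ |t| + |(n:ℝ)| := abs_add_le _ _
        _ ≤ 1 + (n:ℝ) := by rw [this]; linarith
        _ = (n:ℝ) + 1 := by ring
    calc |(ascPochhammer ℝ n).eval t| * |t + (n:ℝ)|
        ≤ (Nat.factorial n : ℝ) * ((n:ℝ) + 1) := by
          apply mul_le_mul ih h1 (abs_nonneg _) (Nat.cast_nonneg _)
      _ = ((n:ℝ) + 1) * (Nat.factorial n : ℝ) := by ring
      _ = (((n+1) : ℕ) : ℝ) * (Nat.factorial n : ℝ) := by push_cast; ring

lemma poch_c_pos (n : ℕ) : 0 < (ascPochhammer ℝ n).eval (3/4) :=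
  ascPochhammer_pos n _ (by norm_num)

lemma poch_c_ge (n : ℕ) :
    ((1:ℝ)/2) ^ n * (Nat.factorial n : ℝ) ≤ (ascPochhammer ℝ n).eval (3/4) := by
  induction n with
  | zero => simp
  | succ n ih =>
    rw [ascPochhammer_succ_eval, Nat.factorial_succ, Nat.cast_mul, pow_succ]
    have hn : ((1:ℝ)/2) * (((n:ℕ)+1 : ℕ) : ℝ) ≤ 3/4 + (n:ℝ) := by
      push_cast; nlinarith [Nat.cast_nonneg (α := ℝ) n]
    have h0 : (0:ℝ) < 3/4 + (n:ℝ) := by positivity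
    calc ((1:ℝ)/2)^n * ((1:ℝ)/2) * ((((n+1):ℕ)) * (Nat.factorial n : ℝ))
        = (((1:ℝ)/2)^n * (Nat.factorial n : ℝ)) * (((1:ℝ)/2) * (((n+1):ℕ) : ℝ)) := by
          push_cast; ring
      _ ≤ (ascPochhammer ℝ n).eval (3/4) * (3/4 + (n:ℝ)) := by
          apply mul_le_mul ih hn (by positivity) (le_of_lt (poch_c_pos n))

lemma cf_abs_le (n : ℕ) : |cf n| ≤ 2 ^ n := by
  have hfac : (0:ℝ) < (Nat.factorial n : ℝ) := by
    exact_mod_cast Nat.factorial_pos n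
  have hc := poch_c_ge n
  have hcpos := poch_c_pos n
  have ha := poch_abs_le (t := 7/24) (by rw [abs_le]; norm_num) n
  have hb := poch_abs_le (t := -1/24) (by rw [abs_le]; norm_num) n
  rw [cf, abs_div, abs_mul, abs_mul]
  rw [abs_of_pos hcpos, abs_of_pos hfac]
  rw [div_le_iff₀ (by positivity)]
  have h2 : ((1:ℝ)/2)^n * (Nat.factorial n : ℝ) * (Nat.factorial n : ℝ) ≤
      (ascPochhammer ℝ n).eval (3/4) * (Nat.factorial n : ℝ) := by
    apply mul_le_mul_of_nonneg_right hc (le_of_lt hfac)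
  calc |(ascPochhammer ℝ n).eval (7/24)| * |(ascPochhammer ℝ n).eval (-1/24)|
      ≤ (Nat.factorial n : ℝ) * (Nat.factorial n : ℝ) := by
        apply mul_le_mul ha hb (abs_nonneg _) (le_of_lt hfac)
    _ = 2^n * (((1:ℝ)/2)^n * (Nat.factorial n : ℝ) * (Nat.factorial n : ℝ)) := by
        rw [← mul_assoc, ← mul_assoc, ← mul_pow]; norm_num
    _ ≤ 2^n * ((ascPochhammer ℝ n).eval (3/4) * (Nat.factorial n : ℝ)) := by
        apply mul_le_mul_of_nonneg_left h2 (by positivity)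

lemma cf_zero : cf 0 = 1 := by simp [cf]

lemma cf_rec (n : ℕ) :
    ((n:ℝ) + 1) * ((n:ℝ) + 3/4) * cf (n+1) = ((n:ℝ) + 7/24) * ((n:ℝ) - 1/24) * cf n := by
  have hcpos := poch_c_pos n
  have hfac : (0:ℝ) < (Nat.factorial n : ℝ) := by exact_mod_cast Nat.factorial_pos n
  have hcn : (3:ℝ)/4 + (n:ℝ) ≠ 0 := by positivity
  have hn1 : ((n:ℝ) + 1) ≠ 0 := by positivity
  rw [cf, cf, ascPochhammer_succ_eval, ascPochhammer_succ_eval, ascPochhammer_succ_eval,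
    Nat.factorial_succ, Nat.cast_mul]
  have : ((((n:ℕ)+1 : ℕ)) : ℝ) = (n:ℝ) + 1 := by push_cast; ring
  rw [this]
  field_simp
  ring



noncomputable def F (t : ℝ) : ℝ := ∑' n, cf n * t ^ n

noncomputable def df (n : ℕ) : ℝ := ((n:ℝ) + 1) * cf (n+1)

noncomputable def ef (n : ℕ) : ℝ := ((n:ℝ) + 1) * df (n+1)

noncomputable def F1 (t : ℝ) : ℝ := ∑' n, df n * t ^ n

noncomputable def F2 (t : ℝ) : ℝ := ∑' n, ef n * t ^ n

lemma nat_le_two_pow (n : ℕ) : (n:ℝ) ≤ 2 ^ n := by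
  exact_mod_cast (Nat.lt_two_pow_self (n := n)).le

lemma nat1_le_two_pow (n : ℕ) : (n:ℝ) + 1 ≤ 2 ^ (n+1) := by
  have := nat_le_two_pow n
  have h2 : (1:ℝ) ≤ 2 ^ n := one_le_pow₀ (by norm_num)
  rw [pow_succ]; nlinarith

lemma df_abs_le (n : ℕ) : |df n| ≤ 4 * 4 ^ n := by
  rw [df, abs_mul, abs_of_pos (by positivity : (0:ℝ) < (n:ℝ)+1)]
  calc ((n:ℝ)+1) * |cf (n+1)| ≤ 2^(n+1) * 2^(n+1) := by
        apply mul_le_mul (nat1_le_two_pow n) (cf_abs_le (n+1)) (abs_nonneg _) (by positivity)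
    _ = 4 * 4^n := by rw [← mul_pow]; ring
lemma ef_abs_le (n : ℕ) : |ef n| ≤ 32 * 8 ^ n := by
  rw [ef, abs_mul, abs_of_pos (by positivity : (0:ℝ) < (n:ℝ)+1)]
  calc ((n:ℝ)+1) * |df (n+1)| ≤ 2^(n+1) * (4 * 4^(n+1)) := by
        apply mul_le_mul (nat1_le_two_pow n) (df_abs_le (n+1)) (abs_nonneg _) (by positivity)
    _ = 32 * 8^n := by rw [show (8:ℝ)=2*4 by norm_num, mul_pow]; ring

lemma summable_of_bound {b : ℕ → ℝ} {C ρ : ℝ} (h0 : 0 ≤ ρ) (hρ : ρ < 1)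
    (h : ∀ n, |b n| ≤ C * ρ ^ n) : Summable b :=
  Summable.of_norm_bounded ((summable_geometric_of_lt_one h0 hρ).mul_left C)
    (by simpa [Real.norm_eq_abs] using h)

section
variable {t : ℝ} (ht : |t| < 1/16)

lemma rho_lt (ht : |t| < 1/16) : 16 * |t| < 1 := by linarith

lemma bound_gen {K : ℝ} {co : ℕ → ℝ} (hco : ∀ n, |co n| ≤ K * 16 ^ n) (n : ℕ) :
    |co n * t ^ n| ≤ K * (16 * |t|) ^ n := by
  rw [abs_mul, abs_pow, mul_pow, ← mul_assoc]
  apply mul_le_mul_of_nonneg_right (hco n) (by positivity)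

lemma s0 (ht : |t| < 1/16) : Summable (fun n => cf n * t ^ n) := by
  refine summable_of_bound (by positivity) (rho_lt ht) (C := 1) (bound_gen fun n => ?_)
  calc |cf n| ≤ 2^n := cf_abs_le n
    _ ≤ 1 * 16^n := by rw [one_mul]; exact pow_le_pow_left₀ (by norm_num) (by norm_num) n

lemma s1 (ht : |t| < 1/16) : Summable (fun n => df n * t ^ n) := by
  refine summable_of_bound (by positivity) (rho_lt ht) (C := 4) (bound_gen fun n => ?_)
  calc |df n| ≤ 4 * 4^n := df_abs_le n
    _ ≤ 4 * 16^n := by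
        have := pow_le_pow_left₀ (by norm_num : (0:ℝ) ≤ 4) (by norm_num : (4:ℝ) ≤ 16) n
        nlinarith

lemma s2 (ht : |t| < 1/16) : Summable (fun n => ef n * t ^ n) := by
  refine summable_of_bound (by positivity) (rho_lt ht) (C := 32) (bound_gen fun n => ?_)
  calc |ef n| ≤ 32 * 8^n := ef_abs_le n
    _ ≤ 32 * 16^n := by
        have := pow_le_pow_left₀ (by norm_num : (0:ℝ) ≤ 8) (by norm_num : (8:ℝ) ≤ 16) n
        nlinarith

lemma s3 (ht : |t| < 1/16) : Summable (fun n : ℕ => (n:ℝ) * df n * t ^ n) := by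
  refine summable_of_bound (by positivity) (rho_lt ht) (C := 4) (bound_gen fun n => ?_)
  rw [abs_mul, abs_of_nonneg (Nat.cast_nonneg (α := ℝ) n)]
  calc (n:ℝ) * |df n| ≤ 2^n * (4 * 4^n) := by
        apply mul_le_mul (nat_le_two_pow n) (df_abs_le n) (abs_nonneg _) (by positivity)
    _ = 4 * 8^n := by rw [show (8:ℝ) = 2*4 by norm_num, mul_pow]; ring
    _ ≤ 4 * 16^n := by
        have := pow_le_pow_left₀ (by norm_num : (0:ℝ) ≤ 8) (by norm_num : (8:ℝ) ≤ 16) n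
        nlinarith

lemma s4 (ht : |t| < 1/16) : Summable (fun n : ℕ => (n:ℝ) * ((n:ℝ) - 1) * cf n * t ^ n) := by
  refine summable_of_bound (by positivity) (rho_lt ht) (C := 1) (bound_gen fun n => ?_)
  rw [abs_mul, abs_mul, abs_of_nonneg (Nat.cast_nonneg (α := ℝ) n)]
  have hm1 : |(n:ℝ) - 1| ≤ 2^n := by
    rw [abs_le]
    constructor
    · have h1 : (0:ℝ) ≤ (n:ℝ) := Nat.cast_nonneg n
      have h2 : (1:ℝ) ≤ 2^n := one_le_pow₀ (by norm_num)
      linarith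
    · have := nat_le_two_pow n; linarith
  calc (n:ℝ) * |(n:ℝ)-1| * |cf n| ≤ 2^n * 2^n * 2^n := by
        apply mul_le_mul _ (cf_abs_le n) (abs_nonneg _) (by positivity)
        apply mul_le_mul (nat_le_two_pow n) hm1 (abs_nonneg _) (by positivity)
    _ = 8^n := by rw [show (8:ℝ) = 2*(2*2) by norm_num, mul_pow, mul_pow]; ring
    _ ≤ 1 * 16^n := by
        rw [one_mul]; exact pow_le_pow_left₀ (by norm_num) (by norm_num) n

lemma s5 (ht : |t| < 1/16) : Summable (fun n : ℕ => (n:ℝ) * cf n * t ^ n) := by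
  refine summable_of_bound (by positivity) (rho_lt ht) (C := 1) (bound_gen fun n => ?_)
  rw [abs_mul, abs_of_nonneg (Nat.cast_nonneg (α := ℝ) n)]
  calc (n:ℝ) * |cf n| ≤ 2^n * 2^n := by
        apply mul_le_mul (nat_le_two_pow n) (cf_abs_le n) (abs_nonneg _) (by positivity)
    _ = 4^n := by rw [← mul_pow]; norm_num
    _ ≤ 1 * 16^n := by
        rw [one_mul]; exact pow_le_pow_left₀ (by norm_num) (by norm_num) n

end

lemma tsum_shift {h : ℕ → ℝ} (hs : Summable h) (h0 : h 0 = 0) :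
    ∑' n, h n = ∑' n, h (n+1) := by
  rw [Summable.tsum_eq_zero_add hs, h0, zero_add]

lemma I1 {t : ℝ} (ht : |t| < 1/16) : t * F2 t = ∑' n : ℕ, (n:ℝ) * df n * t ^ n := by
  rw [F2, ← tsum_mul_left, tsum_shift (s3 ht) (by simp)]
  apply tsum_congr; intro n
  rw [ef]; push_cast; ring

lemma I2 {t : ℝ} (ht : |t| < 1/16) :
    t^2 * F2 t = ∑' n : ℕ, (n:ℝ) * ((n:ℝ) - 1) * cf n * t ^ n := by
  rw [F2, ← tsum_mul_left, tsum_shift (s4 ht) (by simp)]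
  have step : ∀ n : ℕ, (((n:ℕ)+1:ℕ):ℝ) * ((((n:ℕ)+1:ℕ):ℝ) - 1) * cf (n+1) * t ^ (n+1)
      = (n:ℝ) * df n * t ^ n * t := by
    intro n; rw [df]; push_cast; ring
  rw [tsum_congr step, tsum_shift ((s3 ht).mul_right t) (by simp)]
  apply tsum_congr; intro n
  rw [ef, df]; push_cast; ring

lemma I3 {t : ℝ} (ht : |t| < 1/16) : t * F1 t = ∑' n : ℕ, (n:ℝ) * cf n * t ^ n := by
  rw [F1, ← tsum_mul_left, tsum_shift (s5 ht) (by simp)]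
  apply tsum_congr; intro n
  rw [df]; push_cast; ring

lemma FODE {t : ℝ} (ht : |t| < 1/16) :
    t * (1 - t) * F2 t + (3/4 - 5/4 * t) * F1 t + 7/576 * F t = 0 := by
  have e0 : (7:ℝ)/576 * F t = ∑' n, 7/576 * (cf n * t ^ n) := by
    rw [F, tsum_mul_left]
  have e1 : (3:ℝ)/4 * F1 t = ∑' n, 3/4 * (df n * t ^ n) := by
    rw [F1, tsum_mul_left]
  have e3 : (5:ℝ)/4 * (t * F1 t) = ∑' n : ℕ, 5/4 * ((n:ℝ) * cf n * t ^ n) := by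
    rw [I3 ht, tsum_mul_left]
  have key : t * (1 - t) * F2 t + (3/4 - 5/4 * t) * F1 t + 7/576 * F t
      = ((t * F2 t) - (t^2 * F2 t)) + ((3/4 * F1 t) - (5/4 * (t * F1 t))) + (7/576 * F t) := by
    ring
  rw [key, I1 ht, I2 ht, e1, e3, e0]
  rw [← Summable.tsum_sub (s3 ht) (s4 ht), ← Summable.tsum_sub ((s1 ht).mul_left _) ((s5 ht).mul_left _),
    ← Summable.tsum_add ((s3 ht).sub (s4 ht)) (((s1 ht).mul_left _).sub ((s5 ht).mul_left _)),
    ← Summable.tsum_add (((s3 ht).sub (s4 ht)).add (((s1 ht).mul_left _).sub ((s5 ht).mul_left _)))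
      ((s0 ht).mul_left _)]
  have : ∀ n : ℕ, ((n:ℝ) * df n * t ^ n - (n:ℝ) * ((n:ℝ)-1) * cf n * t ^ n
      + (3/4 * (df n * t ^ n) - 5/4 * ((n:ℝ) * cf n * t ^ n)) + 7/576 * (cf n * t ^ n)) = 0 := by
    intro n
    have h := cf_rec n
    rw [df]
    linear_combination t ^ n * h
  rw [tsum_congr this, tsum_zero]

open scoped NNReal ENNReal

lemma pow_ratio2 (m : ℕ) : (2:ℝ)^(m+1) * (1/16)^m = 16 * (1/8)^(m+1) := by
  induction m with
  | zero => norm_num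
  | succ k ih => linear_combination (1/8 : ℝ) * ih

lemma pow_ratio4 (m : ℕ) : (4:ℝ)^(m+1) * (1/16)^m = 16 * (1/4)^(m+1) := by
  induction m with
  | zero => norm_num
  | succ k ih => linear_combination (1/4 : ℝ) * ih

lemma deriv_bound_cf {n : ℕ} {y : ℝ} (hy : |y| ≤ 1/16) :
    |cf n * ((n:ℝ) * y^(n-1))| ≤ 16 * ((n:ℝ) * (1/8)^n) := by
  cases n with
  | zero => simp
  | succ m =>
    rw [Nat.add_sub_cancel, abs_mul, abs_mul, abs_pow,
      abs_of_nonneg (Nat.cast_nonneg (α := ℝ) (m+1))]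
    have h1 : |cf (m+1)| ≤ 2^(m+1) := cf_abs_le _
    have h2 : |y|^m ≤ (1/16)^m := pow_le_pow_left₀ (abs_nonneg _) hy m
    have h3 : (0:ℝ) < ((m:ℝ)+1) := by positivity
    have key : (2:ℝ)^(m+1) * (1/16)^m = 16 * (1/8)^(m+1) := pow_ratio2 m
    have hcast : ((m+1:ℕ):ℝ) = (m:ℝ)+1 := by push_cast; ring
    rw [hcast]
    calc |cf (m+1)| * (((m:ℝ)+1) * |y|^m)
        ≤ 2^(m+1) * (((m:ℝ)+1) * (1/16)^m) := by
          apply mul_le_mul h1 _ (by positivity) (by positivity)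
          exact mul_le_mul_of_nonneg_left h2 (le_of_lt h3)
      _ = (((m:ℝ)+1)) * ((2:ℝ)^(m+1) * (1/16)^m) := by ring
      _ = 16 * (((m:ℝ)+1) * (1/8)^(m+1)) := by rw [key]; ring

lemma deriv_bound_df {n : ℕ} {y : ℝ} (hy : |y| ≤ 1/16) :
    |df n * ((n:ℝ) * y^(n-1))| ≤ 64 * ((n:ℝ) * (1/4)^n) := by
  cases n with
  | zero => simp
  | succ m =>
    rw [Nat.add_sub_cancel, abs_mul, abs_mul, abs_pow,
      abs_of_nonneg (Nat.cast_nonneg (α := ℝ) (m+1))]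
    have h1 : |df (m+1)| ≤ 4 * 4^(m+1) := df_abs_le _
    have h2 : |y|^m ≤ (1/16)^m := pow_le_pow_left₀ (abs_nonneg _) hy m
    have h3 : (0:ℝ) < ((m:ℝ)+1) := by positivity
    have key : (4:ℝ)^(m+1) * (1/16)^m = 16 * (1/4)^(m+1) := pow_ratio4 m
    have hcast : ((m+1:ℕ):ℝ) = (m:ℝ)+1 := by push_cast; ring
    rw [hcast]
    calc |df (m+1)| * (((m:ℝ)+1) * |y|^m)
        ≤ (4 * 4^(m+1)) * (((m:ℝ)+1) * (1/16)^m) := by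
          apply mul_le_mul h1 _ (by positivity) (by positivity)
          exact mul_le_mul_of_nonneg_left h2 (le_of_lt h3)
      _ = 4 * (((m:ℝ)+1)) * ((4:ℝ)^(m+1) * (1/16)^m) := by ring
      _ = 64 * (((m:ℝ)+1) * (1/4)^(m+1)) := by rw [key]; ring

lemma summable_n_geom (r : ℝ) (hr : 0 < r) (hr1 : r < 1) (C : ℝ) :
    Summable (fun n : ℕ => C * ((n:ℝ) * r^n)) := by
  have h := summable_pow_mul_geometric_of_norm_lt_one 1 (r := r)
    (by rw [Real.norm_eq_abs, abs_of_pos hr]; exact hr1)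
  have h2 : Summable (fun n : ℕ => (n:ℝ) * r^n) := by
    apply h.congr; intro n; rw [pow_one]
  exact h2.mul_left C

lemma hasDerivAt_F {y : ℝ} (hy : |y| < 1/16) : HasDerivAt F (F1 y) y := by
  have hmem : y ∈ Metric.ball (0:ℝ) (1/16) := by
    simpa [Metric.mem_ball, Real.dist_eq] using hy
  have husum : Summable (fun n : ℕ => 16 * ((n:ℝ) * (1/8)^n)) :=
    summable_n_geom (1/8) (by norm_num) (by norm_num) 16
  have hder := hasDerivAt_tsum_of_isPreconnected husum Metric.isOpen_ball
      (convex_ball (0:ℝ) (1/16)).isPreconnected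
      (g := fun n z => cf n * z^n) (g' := fun n z => cf n * ((n:ℝ) * z^(n-1)))
      (fun n z _ => (hasDerivAt_pow n z).const_mul (cf n))
      (fun n z hz => by
        rw [Real.norm_eq_abs]
        have : |z| ≤ 1/16 := by
          have := hz; rw [Metric.mem_ball, Real.dist_eq, sub_zero] at this
          linarith
        exact deriv_bound_cf this)
      (Metric.mem_ball_self (by norm_num)) (s0 (by norm_num)) hmem
  have heq : F1 y = ∑' n : ℕ, cf n * ((n:ℝ) * y^(n-1)) := by
    have hs : Summable (fun n : ℕ => cf n * ((n:ℝ) * y^(n-1))) := by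
      apply Summable.of_norm_bounded husum
      intro n; rw [Real.norm_eq_abs]; exact deriv_bound_cf (le_of_lt hy)
    rw [tsum_shift hs (by simp), F1]
    apply tsum_congr; intro n
    rw [df, Nat.add_sub_cancel]; push_cast; ring
  rw [heq]
  exact hder

lemma hasDerivAt_F1 {y : ℝ} (hy : |y| < 1/16) : HasDerivAt F1 (F2 y) y := by
  have hmem : y ∈ Metric.ball (0:ℝ) (1/16) := by
    simpa [Metric.mem_ball, Real.dist_eq] using hy
  have husum : Summable (fun n : ℕ => 64 * ((n:ℝ) * (1/4)^n)) :=
    summable_n_geom (1/4) (by norm_num) (by norm_num) 64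
  have hder := hasDerivAt_tsum_of_isPreconnected husum Metric.isOpen_ball
      (convex_ball (0:ℝ) (1/16)).isPreconnected
      (g := fun n z => df n * z^n) (g' := fun n z => df n * ((n:ℝ) * z^(n-1)))
      (fun n z _ => (hasDerivAt_pow n z).const_mul (df n))
      (fun n z hz => by
        rw [Real.norm_eq_abs]
        have : |z| ≤ 1/16 := by
          have := hz; rw [Metric.mem_ball, Real.dist_eq, sub_zero] at this
          linarith
        exact deriv_bound_df this)
      (Metric.mem_ball_self (by norm_num)) (s1 (by norm_num)) hmem
  have heq : F2 y = ∑' n : ℕ, df n * ((n:ℝ) * y^(n-1)) := by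
    have hs : Summable (fun n : ℕ => df n * ((n:ℝ) * y^(n-1))) := by
      apply Summable.of_norm_bounded husum
      intro n; rw [Real.norm_eq_abs]; exact deriv_bound_df (le_of_lt hy)
    rw [tsum_shift hs (by simp), F2]
    apply tsum_congr; intro n
    rw [ef, Nat.add_sub_cancel]; push_cast; ring
  rw [heq]
  exact hder

lemma analyticAt_of_coeff_bound {co : ℕ → ℝ} {C : ℝ} (hC : 0 ≤ C)
    (h : ∀ n, |co n| ≤ C * 8^n) :
    AnalyticAt ℝ (fun t : ℝ => ∑' n, co n * t ^ n) 0 := by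
  set p := FormalMultilinearSeries.ofScalars ℝ co with hp
  have hrad : ((1/16 : ℝ≥0) : ENNReal) ≤ p.radius := by
    apply p.le_radius_of_bound C
    intro n
    rw [hp, FormalMultilinearSeries.ofScalars_norm, Real.norm_eq_abs]
    have h16 : (((1/16 : ℝ≥0)) : ℝ) = 1/16 := by norm_num
    rw [h16]
    calc |co n| * (1/16)^n ≤ (C * 8^n) * (1/16)^n := by
          apply mul_le_mul_of_nonneg_right (h n) (by positivity)
      _ = C * (1/2)^n := by rw [mul_assoc, ← mul_pow]; norm_num
      _ ≤ C * 1 := by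
          apply mul_le_mul_of_nonneg_left _ hC
          exact pow_le_one₀ (by norm_num) (by norm_num)
      _ = C := mul_one C
  have hball : HasFPowerSeriesOnBall (fun t : ℝ => ∑' n, co n * t ^ n) p 0
      ((1/16 : ℝ≥0) : ENNReal) := by
    refine ⟨hrad, by norm_num, ?_⟩
    intro y hy
    have hy' : |y| < 1/16 := by
      rw [Metric.emetric_ball_nnreal, Metric.mem_ball, Real.dist_eq, sub_zero] at hy
      have h16 : (((1/16 : ℝ≥0)) : ℝ) = 1/16 := by norm_num
      rwa [h16] at hy
    have hsum : Summable (fun n : ℕ => co n * y ^ n) := by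
      apply summable_of_bound (ρ := 8 * |y|) (by positivity) (by linarith)
        (C := C)
      intro n
      rw [abs_mul, abs_pow, mul_pow, ← mul_assoc]
      exact mul_le_mul_of_nonneg_right (h n) (by positivity)
    have hfun : (fun n => p n fun _ => y) = fun n : ℕ => co n * y ^ n := by
      funext n
      rw [hp, FormalMultilinearSeries.ofScalars_apply_eq, smul_eq_mul]
    rw [hfun]
    simp only [zero_add]
    exact hsum.hasSum
  exact hball.analyticAt

lemma analyticAt_F : AnalyticAt ℝ F 0 := by
  have := analyticAt_of_coeff_bound (co := cf) (C := 1) (by norm_num)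
    (fun n => by
      calc |cf n| ≤ 2^n := cf_abs_le n
        _ ≤ 1 * 8^n := by rw [one_mul]; exact pow_le_pow_left₀ (by norm_num) (by norm_num) n)
  exact this

lemma analyticAt_F1 : AnalyticAt ℝ F1 0 := by
  have := analyticAt_of_coeff_bound (co := df) (C := 4) (by norm_num)
    (fun n => by
      calc |df n| ≤ 4 * 4^n := df_abs_le n
        _ ≤ 4 * 8^n := by
            have := pow_le_pow_left₀ (by norm_num : (0:ℝ) ≤ 4) (by norm_num : (4:ℝ) ≤ 8) n
            nlinarith)
  exact this

lemma F_zero : F 0 = 1 := by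
  rw [F, tsum_eq_single 0 (fun n hn => by simp [zero_pow hn])]
  simp [cf_zero]

noncomputable section

lemma hasDerivAt_congr' {f g : ℝ → ℝ} {d d' x : ℝ} (h : HasDerivAt f d x)
    (hfg : ∀ y, g y = f y) (hd : d' = d) : HasDerivAt g d' x := by
  rw [hd]
  exact h.congr_of_eventuallyEq (Filter.Eventually.of_forall hfg)

def qf (x : ℝ) : ℝ := x^2 + 14*x + 1
def Nf (x : ℝ) : ℝ := 108*x*(x-1)^4
def N1 (x : ℝ) : ℝ := 108*(x-1)^4 + 432*x*(x-1)^3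
def N2 (x : ℝ) : ℝ := 864*(x-1)^3 + 1296*x*(x-1)^2
def Af (x : ℝ) : ℝ := N1 x * qf x - 3*(2*x+14)*Nf x
def A1 (x : ℝ) : ℝ := N2 x * qf x + N1 x * (2*x+14) - 6*Nf x - 3*(2*x+14)*N1 x
def Bf (x : ℝ) : ℝ := A1 x * qf x - 4*(2*x+14)*Af x
def zf (x : ℝ) : ℝ := Nf x / qf x ^ 3
def z1f (x : ℝ) : ℝ := Af x / qf x ^ 4
def z2f (x : ℝ) : ℝ := Bf x / qf x ^ 5

def uu (x : ℝ) : ℝ := F (zf x)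
def u1 (x : ℝ) : ℝ := F1 (zf x) * z1f x
def u2 (x : ℝ) : ℝ := F2 (zf x) * z1f x ^ 2 + F1 (zf x) * z2f x

def gg (x : ℝ) : ℝ := qf x ^ (-(1/8) : ℝ)
def g1 (x : ℝ) : ℝ := -(1/8) * qf x ^ (-(9/8) : ℝ) * (2*x+14)
def g2 (x : ℝ) : ℝ := (9/64)*(2*x+14)^2 * qf x ^ (-(17/8) : ℝ) - (1/4) * qf x ^ (-(9/8) : ℝ)

def Pc (x : ℝ) : ℝ := zf x * (1 - zf x) * z1f x
def Qc (x : ℝ) : ℝ := (3/4 - 5/4 * zf x) * z1f x ^ 2 - zf x * (1 - zf x) * z2f x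
def Rc (x : ℝ) : ℝ := (7/576) * z1f x ^ 3

def KeyExpr (x : ℝ) : ℝ :=
  Nf x * (qf x^3 - Nf x) * Af x * ((9/64)*(2*x+14)^2 - (1/4)*qf x)
  - (1/8)*(2*x+14) * ((3/4*qf x^3 - 5/4*Nf x) * Af x^2 - Nf x*(qf x^3 - Nf x)*Bf x)
  + (7/576)*Af x^3

lemma keyZ (x : ℝ) : KeyExpr x = 0 := by
  simp only [KeyExpr, Nf, qf, Af, Bf, N1, N2, A1]
  ring

lemma hq {x : ℝ} : HasDerivAt qf (2*x+14) x :=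
  hasDerivAt_congr' (((hasDerivAt_pow 2 x).add ((hasDerivAt_id x).const_mul (14:ℝ))).add_const (1:ℝ))
    (fun y => by simp only [qf, id_eq, Pi.add_apply, Pi.mul_apply, Pi.sub_apply, Pi.pow_apply]) (by push_cast; ring)

lemma hxm1 {x : ℝ} (n : ℕ) : HasDerivAt (fun y : ℝ => (y-1)^n) ((n:ℝ)*(x-1)^(n-1)) x :=
  hasDerivAt_congr' (((hasDerivAt_id x).sub_const (1:ℝ)).pow n)
    (fun y => by simp only [id_eq, Pi.add_apply, Pi.mul_apply, Pi.sub_apply, Pi.pow_apply]) (by simp only [id_eq]; ring)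

lemma hN {x : ℝ} : HasDerivAt Nf (N1 x) x :=
  hasDerivAt_congr' (((hasDerivAt_id x).const_mul (108:ℝ)).mul (hxm1 4))
    (fun y => by simp only [Nf, id_eq, Pi.add_apply, Pi.mul_apply, Pi.sub_apply, Pi.pow_apply]) (by simp only [N1, id_eq]; push_cast; ring)

lemma hN1 {x : ℝ} : HasDerivAt N1 (N2 x) x :=
  hasDerivAt_congr' (((hxm1 (x := x) 4).const_mul (108:ℝ)).add
      (((hasDerivAt_id x).const_mul (432:ℝ)).mul (hxm1 3)))
    (fun y => by simp only [N1, id_eq, Pi.add_apply, Pi.mul_apply, Pi.sub_apply, Pi.pow_apply]) (by simp only [N2, id_eq]; push_cast; ring)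

lemma hlin {x : ℝ} : HasDerivAt (fun y : ℝ => 2*y+14) (2:ℝ) x :=
  hasDerivAt_congr' (((hasDerivAt_id x).const_mul (2:ℝ)).add_const (14:ℝ))
    (fun y => by simp only [id_eq]) (by norm_num)

lemma hA {x : ℝ} : HasDerivAt Af (A1 x) x :=
  hasDerivAt_congr' (((hN1 (x := x)).mul hq).sub ((hlin.const_mul (3:ℝ)).mul hN))
    (fun y => by simp only [Af, Pi.add_apply, Pi.mul_apply, Pi.sub_apply, Pi.pow_apply]) (by simp only [A1]; ring)

lemma hz {x : ℝ} (hqne : qf x ≠ 0) : HasDerivAt zf (z1f x) x := by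
  have h := hN.div (hq.pow 3) (pow_ne_zero 3 hqne)
  refine h.congr_deriv ?_
  simp only [z1f, Af, N1, Pi.pow_apply]
  field_simp
  ring

lemma hz1 {x : ℝ} (hqne : qf x ≠ 0) : HasDerivAt z1f (z2f x) x := by
  have h := hA.div (hq.pow 4) (pow_ne_zero 4 hqne)
  refine h.congr_deriv ?_
  simp only [z2f, Bf, A1, Pi.pow_apply]
  field_simp
  ring

lemma hu {x : ℝ} (hz16 : |zf x| < 1/16) (hqne : qf x ≠ 0) :
    HasDerivAt uu (u1 x) x :=
  (hasDerivAt_F hz16).comp x (hz hqne)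

lemma hu1 {x : ℝ} (hz16 : |zf x| < 1/16) (hqne : qf x ≠ 0) :
    HasDerivAt u1 (u2 x) x := by
  exact hasDerivAt_congr' (((hasDerivAt_F1 hz16).comp x (hz hqne)).mul (hz1 hqne))
    (fun y => rfl) (by simp only [u2, Function.comp]; ring)

lemma hg {x : ℝ} (hq0 : 0 < qf x) : HasDerivAt gg (g1 x) x := by
  have h := (hq (x := x)).rpow_const (p := (-(1/8):ℝ)) (Or.inl (ne_of_gt hq0))
  have e : (-(1/8) - 1 : ℝ) = -(9/8) := by norm_num
  rw [e] at h
  exact hasDerivAt_congr' h (fun y => rfl) (by simp only [g1]; ring)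

lemma hg1 {x : ℝ} (hq0 : 0 < qf x) : HasDerivAt g1 (g2 x) x := by
  have hr := (hq (x := x)).rpow_const (p := (-(9/8):ℝ)) (Or.inl (ne_of_gt hq0))
  have e : (-(9/8) - 1 : ℝ) = -(17/8) := by norm_num
  rw [e] at hr
  exact hasDerivAt_congr' ((hr.const_mul (-(1/8):ℝ)).mul hlin)
    (fun y => by simp only [g1, Pi.mul_apply]) (by simp only [g2]; ring)

lemma uODE {x : ℝ} (hz16 : |zf x| < 1/16) :
    Pc x * u2 x + Qc x * u1 x + Rc x * uu x = 0 := by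
  have h := FODE hz16
  simp only [Pc, Qc, Rc, uu, u1, u2]
  linear_combination (z1f x)^3 * h

lemma gODE {x : ℝ} (hq0 : 0 < qf x) :
    Pc x * g2 x + Qc x * g1 x + Rc x * gg x = 0 := by
  have hqne : qf x ≠ 0 := ne_of_gt hq0
  obtain ⟨w, hw⟩ : ∃ w : ℝ, qf x ^ (-(17/8) : ℝ) = w := ⟨_, rfl⟩
  have e1 : qf x ^ (-(9/8) : ℝ) = w * qf x := by
    rw [← hw, show (-(9/8) : ℝ) = -(17/8) + 1 by norm_num, Real.rpow_add hq0, Real.rpow_one]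
  have e2 : qf x ^ (-(1/8) : ℝ) = w * qf x ^ 2 := by
    rw [← hw, show (-(1/8) : ℝ) = -(17/8) + 2 by norm_num, Real.rpow_add hq0,
      show ((2:ℝ)) = ((2:ℕ):ℝ) by norm_num, Real.rpow_natCast]
  have main : Pc x * g2 x + Qc x * g1 x + Rc x * gg x
      = w * KeyExpr x / qf x ^ 10 := by
    simp only [Pc, Qc, Rc, gg, g1, g2, zf, z1f, z2f, KeyExpr]
    rw [e1, e2, hw]
    field_simp
    ring
  rw [main, keyZ, mul_zero, zero_div]

end
lemma qf_zero : qf 0 = 1 := by norm_num [qf]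
lemma qf_zero_pos : (0:ℝ) < qf 0 := by norm_num [qf]
lemma qf_zero_ne : qf 0 ≠ 0 := by norm_num [qf]
lemma zf_zero : zf 0 = 0 := by norm_num [zf, Nf, qf]

lemma analyticAt_qf : AnalyticAt ℝ qf 0 := by
  have : AnalyticAt ℝ (fun x : ℝ => x^2 + 14*x + 1) 0 :=
    (((analyticAt_id (𝕜 := ℝ) (z := (0:ℝ))).pow 2).add ((analyticAt_const.mul (analyticAt_id (𝕜 := ℝ) (z := (0:ℝ)))))).add
      analyticAt_const
  exact this

lemma analyticAt_Nf : AnalyticAt ℝ Nf 0 := by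
  have : AnalyticAt ℝ (fun x : ℝ => 108*x*(x-1)^4) 0 :=
    ((analyticAt_const.mul (analyticAt_id (𝕜 := ℝ) (z := (0:ℝ)))).mul
      (((analyticAt_id (𝕜 := ℝ) (z := (0:ℝ))).sub analyticAt_const).pow 4))
  exact this

lemma analyticAt_N1 : AnalyticAt ℝ N1 0 := by
  have : AnalyticAt ℝ (fun x : ℝ => 108*(x-1)^4 + 432*x*(x-1)^3) 0 :=
    (analyticAt_const.mul (((analyticAt_id (𝕜 := ℝ) (z := (0:ℝ))).sub analyticAt_const).pow 4)).add
      ((analyticAt_const.mul (analyticAt_id (𝕜 := ℝ) (z := (0:ℝ)))).mul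
        (((analyticAt_id (𝕜 := ℝ) (z := (0:ℝ))).sub analyticAt_const).pow 3))
  exact this

lemma analyticAt_lin : AnalyticAt ℝ (fun x : ℝ => 2*x+14) 0 :=
  (analyticAt_const.mul (analyticAt_id (𝕜 := ℝ) (z := (0:ℝ)))).add analyticAt_const

lemma analyticAt_Af : AnalyticAt ℝ Af 0 := by
  have : AnalyticAt ℝ (fun x : ℝ => N1 x * qf x - 3*(2*x+14)*Nf x) 0 :=
    (analyticAt_N1.mul analyticAt_qf).sub
      ((analyticAt_const.mul analyticAt_lin).mul analyticAt_Nf)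
  exact this

lemma analyticAt_zf : AnalyticAt ℝ zf 0 :=
  analyticAt_Nf.div (analyticAt_qf.pow 3) (by norm_num [qf])

lemma analyticAt_z1f : AnalyticAt ℝ z1f 0 :=
  analyticAt_Af.div (analyticAt_qf.pow 4) (by norm_num [qf])

lemma analyticAt_uu : AnalyticAt ℝ uu 0 := by
  have hF : AnalyticAt ℝ F (zf 0) := by rw [zf_zero]; exact analyticAt_F
  exact hF.comp analyticAt_zf

lemma analyticAt_u1 : AnalyticAt ℝ u1 0 := by
  have hF : AnalyticAt ℝ F1 (zf 0) := by rw [zf_zero]; exact analyticAt_F1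
  exact (hF.comp analyticAt_zf).mul analyticAt_z1f

lemma analyticAt_rlog {x : ℝ} (hx : 0 < x) : AnalyticAt ℝ Real.log x := by
  have h1 : AnalyticAt ℂ Complex.log ((x:ℝ):ℂ) := by
    apply analyticAt_clog
    rw [Complex.mem_slitPlane_iff]
    left
    simpa using hx
  have h2 : AnalyticAt ℝ (fun t : ℝ => Complex.log ((t:ℝ):ℂ)) x :=
    h1.restrictScalars.comp (Complex.ofRealCLM.analyticAt x)
  have h3 : AnalyticAt ℝ (fun t : ℝ => (Complex.log ((t:ℝ):ℂ)).re) x :=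
    (Complex.reCLM.analyticAt _).comp h2
  apply h3.congr
  filter_upwards with y
  exact Complex.log_ofReal_re y

lemma ev_qf_pos : ∀ᶠ x in nhds (0:ℝ), 0 < qf x := by
  have hc : ContinuousAt qf 0 := (hq (x := (0:ℝ))).continuousAt
  exact hc.tendsto.eventually (eventually_gt_nhds qf_zero_pos)

lemma analyticAt_qrpow (p : ℝ) : AnalyticAt ℝ (fun x => qf x ^ p) 0 := by
  have hlog : AnalyticAt ℝ (fun x => Real.exp (Real.log (qf x) * p)) 0 := by
    apply AnalyticAt.rexp
    apply AnalyticAt.mul _ analyticAt_const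
    have h := analyticAt_rlog qf_zero_pos
    exact h.comp analyticAt_qf
  apply hlog.congr
  filter_upwards [ev_qf_pos] with y hy
  rw [Real.rpow_def_of_pos hy]

lemma analyticAt_gg : AnalyticAt ℝ gg 0 := analyticAt_qrpow _

lemma analyticAt_g1 : AnalyticAt ℝ g1 0 := by
  have : AnalyticAt ℝ (fun x : ℝ => -(1/8) * qf x ^ (-(9/8):ℝ) * (2*x+14)) 0 :=
    (analyticAt_const.mul (analyticAt_qrpow _)).mul analyticAt_lin
  exact this

/-- The Wronskian of `uu` and `gg`. -/
noncomputable def W (x : ℝ) : ℝ := uu x * g1 x - u1 x * gg x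

lemma analyticAt_W : AnalyticAt ℝ W 0 :=
  (analyticAt_uu.mul analyticAt_g1).sub (analyticAt_u1.mul analyticAt_gg)

lemma ev_zf_small : ∀ᶠ x in nhds (0:ℝ), |zf x| < 1/16 := by
  have hzc : ContinuousAt zf 0 := (hz qf_zero_ne).continuousAt
  have h : ∀ᶠ y in nhds (zf 0), |y| < 1/16 := by
    rw [zf_zero]
    filter_upwards [Metric.ball_mem_nhds (0:ℝ) (by norm_num : (0:ℝ) < 1/16)] with y hy
    simpa [Real.dist_eq] using hy
  exact hzc.tendsto.eventually h

lemma ev_W_deriv : ∀ᶠ x in nhds (0:ℝ),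
    HasDerivAt W (uu x * g2 x - u2 x * gg x) x ∧
    Pc x * (uu x * g2 x - u2 x * gg x) + Qc x * W x = 0 := by
  filter_upwards [ev_qf_pos, ev_zf_small] with x hq0 hz16
  have hqne : qf x ≠ 0 := ne_of_gt hq0
  constructor
  · have h := ((hu hz16 hqne).mul (hg1 hq0)).sub ((hu1 hz16 hqne).mul (hg hq0))
    exact hasDerivAt_congr' h (fun y => rfl) (by ring)
  · have h1 := gODE hq0
    have h2 := uODE hz16
    simp only [W]
    linear_combination uu x * h1 - gg x * h2
noncomputable def Pt (x : ℝ) : ℝ := (108*(x-1)^4 / qf x ^ 3) * (1 - zf x) * z1f x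

lemma Pc_eq (x : ℝ) : Pc x = x * Pt x := by
  simp only [Pc, Pt, zf, Nf, z1f]
  ring

lemma Pt_zero : Pt 0 = 11664 := by
  norm_num [Pt, zf, z1f, Af, N1, Nf, qf]

lemma Qc_zero : Qc 0 = 8748 := by
  norm_num [Qc, zf, z1f, z2f, Af, Bf, N1, N2, A1, Nf, qf]

lemma contAt_zf : ContinuousAt zf 0 := (hz qf_zero_ne).continuousAt
lemma contAt_z1f : ContinuousAt z1f 0 := (hz1 qf_zero_ne).continuousAt

lemma contAt_z2f : ContinuousAt z2f 0 := by
  have cB : ContinuousAt Bf 0 := by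
    have : ContinuousAt (fun x : ℝ => A1 x * qf x - 4*(2*x+14)*Af x) 0 := by
      simp only [A1, Af, N1, N2, Nf, qf]
      fun_prop
    exact this
  have cq : ContinuousAt (fun x : ℝ => qf x ^ 5) 0 := by
    simp only [qf]; fun_prop
  exact cB.div cq (by norm_num [qf])

lemma contAt_Pt : ContinuousAt Pt 0 := by
  have c1 : ContinuousAt (fun x : ℝ => 108*(x-1)^4) 0 := by fun_prop
  have c2 : ContinuousAt (fun x : ℝ => qf x ^ 3) 0 := by simp only [qf]; fun_prop
  exact ((c1.div c2 (by norm_num [qf])).mul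
    (continuousAt_const.sub contAt_zf)).mul contAt_z1f

lemma contAt_Qc : ContinuousAt Qc 0 := by
  exact ((continuousAt_const.sub (continuousAt_const.mul contAt_zf)).mul
    (contAt_z1f.pow 2)).sub ((contAt_zf.mul (continuousAt_const.sub contAt_zf)).mul contAt_z2f)

lemma W_ev_zero : ∀ᶠ x in nhds (0:ℝ), W x = 0 := by
  by_cases htop : analyticOrderAt W 0 = ⊤
  · exact analyticOrderAt_eq_top.mp htop
  obtain ⟨n, hn⟩ := WithTop.ne_top_iff_exists.mp htop
  obtain ⟨ψ, hψa, hψ0, hev⟩ := (analyticAt_W.analyticOrderAt_eq_natCast (n := n)).mp hn.symm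
  exfalso
  have hψc : ContinuousAt ψ 0 := hψa.continuousAt
  have hψd : ContinuousAt (deriv ψ) 0 := by
    have h2 : ContinuousAt (fderiv ℝ ψ) 0 := hψa.fderiv.continuousAt
    have heq : deriv ψ = fun y => (fderiv ℝ ψ y) 1 := by
      funext y; rw [← fderiv_apply_one_eq_deriv]
    rw [heq]
    exact ((ContinuousLinearMap.apply ℝ ℝ (1:ℝ)).continuous.continuousAt).comp h2
  have hev2 : ∀ᶠ x in nhds (0:ℝ), ∀ᶠ z in nhds x, W z = (z - 0)^n • ψ z :=
    hev.eventually_nhds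
  have hevd : ∀ᶠ x in nhds (0:ℝ), DifferentiableAt ℝ ψ x :=
    hψa.eventually_analyticAt.mono (fun z hz => hz.differentiableAt)
  set h : ℝ → ℝ :=
    fun x => (n:ℝ) * Pt x * ψ x + x * Pt x * deriv ψ x + Qc x * ψ x with hh
  have key : ∀ᶠ x in nhds (0:ℝ), x ≠ 0 → h x = 0 := by
    filter_upwards [ev_W_deriv, hev2, hevd, hev] with x hWd hWloc hdiff hWx hx0
    obtain ⟨hW1, hW2⟩ := hWd
    have hD : HasDerivAt (fun z : ℝ => (z-0)^n • ψ z)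
        ((n:ℝ)*x^(n-1) * ψ x + x^n * deriv ψ x) x := by
      refine hasDerivAt_congr' ((hasDerivAt_pow n x).mul hdiff.hasDerivAt)
        (fun y => by simp [smul_eq_mul]) (by ring)
    have hWd2 : HasDerivAt W ((n:ℝ)*x^(n-1)*ψ x + x^n * deriv ψ x) x :=
      hD.congr_of_eventuallyEq hWloc
    have huniq : uu x * g2 x - u2 x * gg x = (n:ℝ)*x^(n-1)*ψ x + x^n*deriv ψ x :=
      hW1.unique hWd2
    rw [huniq, hWx, Pc_eq] at hW2
    simp only [sub_zero, smul_eq_mul] at hW2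
    have hxn : x^n ≠ 0 := pow_ne_zero n hx0
    have hpow : (n:ℝ) * x^(n-1) * x = (n:ℝ) * x^n := by
      cases n with
      | zero => simp
      | succ m => rw [Nat.add_sub_cancel, pow_succ]; ring
    have expand : x * Pt x * ((n:ℝ)*x^(n-1)*ψ x + x^n*deriv ψ x) + Qc x * (x^n * ψ x)
        = x^n * h x := by
      rw [hh]
      linear_combination (Pt x * ψ x) * hpow
    rw [expand] at hW2
    exact (mul_eq_zero.mp hW2).resolve_left hxn
  have hcont : ContinuousAt h 0 := by
    rw [hh]
    exact (((continuousAt_const.mul contAt_Pt).mul hψc).add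
      (((continuousAt_id.mul contAt_Pt).mul hψd))).add ((contAt_Qc).mul hψc)
  have hev0 : ∀ᶠ x in nhdsWithin (0:ℝ) {(0:ℝ)}ᶜ, h x = 0 := by
    rw [eventually_nhdsWithin_iff]
    filter_upwards [key] with x hx hmem
    exact hx hmem
  have hlim : Filter.Tendsto h (nhdsWithin (0:ℝ) {(0:ℝ)}ᶜ) (nhds (h 0)) :=
    hcont.tendsto.mono_left nhdsWithin_le_nhds
  have hzero : h 0 = 0 :=
    tendsto_nhds_unique hlim (by rw [Filter.tendsto_congr' hev0]; exact tendsto_const_nhds)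
  rw [hh] at hzero
  simp only [Pt_zero, Qc_zero] at hzero
  have hfin : ((n:ℝ) * 11664 + 8748) * ψ 0 = 0 := by linear_combination hzero
  have hne : ((n:ℝ) * 11664 + 8748) ≠ 0 := by positivity
  exact hψ0 ((mul_eq_zero.mp hfin).resolve_left hne)
lemma uu_zero : uu 0 = 1 := by rw [uu, zf_zero, F_zero]

lemma gg_zero : gg 0 = 1 := by rw [gg, qf_zero, Real.one_rpow]

lemma gg_pos {x : ℝ} (hq0 : 0 < qf x) : 0 < gg x := Real.rpow_pos_of_pos hq0 _

lemma uu_eq_gg : ∀ᶠ x in nhds (0:ℝ), uu x = gg x := by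
  obtain ⟨δ, hδ, hball⟩ := Metric.eventually_nhds_iff.mp
    ((ev_qf_pos.and ev_zf_small).and W_ev_zero)
  set s := Metric.ball (0:ℝ) δ with hs
  set φ : ℝ → ℝ := fun y => uu y / gg y with hφ
  have hφd : ∀ y ∈ s, HasDerivAt φ 0 y := by
    intro y hy
    rw [hs, Metric.mem_ball] at hy
    obtain ⟨⟨hq0, hz16⟩, hW0⟩ := hball hy
    have hgne : gg y ≠ 0 := ne_of_gt (gg_pos hq0)
    have hd := (hu hz16 (ne_of_gt hq0)).div (hg hq0) hgne
    refine hasDerivAt_congr' hd (fun _ => rfl) ?_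
    have hnum : u1 y * gg y - uu y * g1 y = 0 := by
      simp only [W] at hW0
      linarith
    rw [hnum, zero_div]
  have hconst : ∀ y ∈ s, φ y = φ 0 := by
    intro y hy
    have h0s : (0:ℝ) ∈ s := Metric.mem_ball_self hδ
    refine (convex_ball (0:ℝ) δ).is_const_of_fderivWithin_eq_zero
      (fun z hz => ((hφd z hz).differentiableAt).differentiableWithinAt) ?_ hy h0s
    intro z hz
    have h0 : HasFDerivAt φ (0 : ℝ →L[ℝ] ℝ) z := by
      have hh := (hφd z hz).hasFDerivAt
      simpa using hh
    rw [fderivWithin_of_isOpen Metric.isOpen_ball hz, h0.fderiv]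
  have hφ0 : φ 0 = 1 := by rw [hφ]; simp [uu_zero, gg_zero]
  filter_upwards [Metric.ball_mem_nhds (0:ℝ) hδ] with x hx
  have h1 : φ x = 1 := (hconst x hx).trans hφ0
  have hgne : gg x ≠ 0 := by
    rw [Metric.mem_ball] at hx
    exact ne_of_gt (gg_pos (hball hx).1.1)
  rw [hφ] at h1
  field_simp [hφ] at h1
  exact h1

end Dbx

theorem stmt_9 :
    ∃ ε > (0 : ℝ), ∀ x : ℝ, |x| < ε →
      hyp (7/24) (-1/24) (3/4)
          (108 * x * (x - 1) ^ 4 / (x ^ 2 + 14 * x + 1) ^ 3) =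
        (1 + 14 * x + x ^ 2) ^ (-(1/8) : ℝ) := by
  obtain ⟨ε, hε, hball⟩ := Metric.eventually_nhds_iff.mp Dbx.uu_eq_gg
  refine ⟨ε, hε, fun x hx => ?_⟩
  have h : Dbx.uu x = Dbx.gg x := hball (by simpa [Real.dist_eq] using hx)
  have hL : hyp (7/24) (-1/24) (3/4)
      (108 * x * (x - 1) ^ 4 / (x ^ 2 + 14 * x + 1) ^ 3) = Dbx.uu x := by
    rw [Dbx.hyp_eq, Dbx.uu, Dbx.F]
    rfl
  have hR : ((1:ℝ) + 14 * x + x ^ 2) ^ (-(1/8) : ℝ) = Dbx.gg x := by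
    rw [Dbx.gg]
    congr 1
    simp only [Dbx.qf]
    ring
  rw [hL, h, ← hR]
end
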